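/- arXiv:math/0506582 — 3 statements merged into one kernel-verified Lean document; each statement's English description precedes it below -/
import Mathlib

section
/- If {T_{α,β}} is a Cuntz–Krieger (Λ, Λ^0)-family, then the collection {t_λ := T_{λ, s(λ)} : λ ∈ Λ} is a Cuntz–Krieger Λ-family; that is, it satisfies: the t_v (v ∈ Λ^0) are mutually orthogonal projections, t_λ t_μ = t_{λμ} when s(λ)=r(μ), t_λ* t_μ = Σ_{(α,β) ∈ Λ^min(λ,μ)} t_α t_β*, and Π_{λ∈E}(t_v − t_λ t_λ*) = 0 for all finite exhaustive E ⊆ vΛ. -/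
open scoped BigOperators

/-- A `k`-graph, presented algebraically: a small category whose morphisms
carry a degree in `ℕ^k` satisfying the unique factorisation property.
Vertices (objects) are identified with the identity morphisms; `src`/`rng`
send a morphism to the identity morphism at its source/range. Composition
`comp p q` is only meaningful when `src p = rng q` (i.e. `p q` is the path
`p` followed after `q`, as in `r(pq) = r(p)`, `s(pq) = s(q)`). -/
structure KGraph (k : ℕ) where
  Path : Type
  src : Path → Path
  rng : Path → Path
  comp : Path → Path → Path
  deg : Path → (Fin k → ℕ)
  countable : Countable Path
  deg_src : ∀ p, deg (src p) = 0
  deg_rng : ∀ p, deg (rng p) = 0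
  src_src : ∀ p, src (src p) = src p
  rng_src : ∀ p, rng (src p) = src p
  src_rng : ∀ p, src (rng p) = rng p
  rng_rng : ∀ p, rng (rng p) = rng p
  src_comp : ∀ p q, src p = rng q → src (comp p q) = src q
  rng_comp : ∀ p q, src p = rng q → rng (comp p q) = rng p
  deg_comp : ∀ p q, src p = rng q → deg (comp p q) = deg p + deg q
  comp_assoc : ∀ p q r, src p = rng q → src q = rng r →
    comp (comp p q) r = comp p (comp q r)
  comp_id : ∀ p, comp p (src p) = p
  id_comp : ∀ p, comp (rng p) p = p
  factor : ∀ p m n, deg p = m + n →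
    ∃! x : Path × Path, deg x.1 = m ∧ deg x.2 = n ∧ src x.1 = rng x.2 ∧
      p = comp x.1 x.2

namespace KGraph

variable {k : ℕ} (Λ : KGraph k)

/-- Vertices are the identity morphisms. -/
def IsVertex (p : Λ.Path) : Prop := Λ.src p = p ∧ Λ.rng p = p ∧ Λ.deg p = 0

/-- `Λ^min(l,m)`: pairs `(α,β)` with `lα = mβ` of degree `d(l) ∨ d(m)`. -/
def minExt (l m : Λ.Path) : Set (Λ.Path × Λ.Path) :=
  {x | Λ.src l = Λ.rng x.1 ∧ Λ.src m = Λ.rng x.2 ∧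
    Λ.comp l x.1 = Λ.comp m x.2 ∧ Λ.deg l + Λ.deg x.1 = Λ.deg l ⊔ Λ.deg m}

/-- `Λ^n(l,m)`: common extensions of `l` and `m` of degree `n`. -/
def commonExt (l m : Λ.Path) (n : Fin k → ℕ) : Set (Λ.Path × Λ.Path) :=
  {x | Λ.src l = Λ.rng x.1 ∧ Λ.src m = Λ.rng x.2 ∧
    Λ.comp l x.1 = Λ.comp m x.2 ∧ Λ.deg l + Λ.deg x.1 = n}

/-- `Λ` is finitely aligned if each `Λ^min(l,m)` is finite. -/
def FinitelyAligned : Prop := ∀ l m, (Λ.minExt l m).Finite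

/-- `vΛ`, the paths with range `v`. -/
def vP (v : Λ.Path) : Set Λ.Path := {p | Λ.rng p = v}

/-- `vΛ^n`, the paths with range `v` and degree `n`. -/
def vPn (v : Λ.Path) (n : Fin k → ℕ) : Set Λ.Path := {p | Λ.rng p = v ∧ Λ.deg p = n}

/-- `Λ^n v`, the paths with source `v` and degree `n`. -/
def Pnv (n : Fin k → ℕ) (v : Λ.Path) : Set Λ.Path := {p | Λ.src p = v ∧ Λ.deg p = n}

/-- `E ⊆ vΛ` is exhaustive if every `μ ∈ vΛ` has a minimal common extension
with some member of `E`. -/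
def Exhaustive (v : Λ.Path) (E : Set Λ.Path) : Prop :=
  ∀ m ∈ Λ.vP v, ∃ l ∈ E, (Λ.minExt l m).Nonempty

/-- Row finiteness: each `vΛ^n` is finite. -/
def RowFinite : Prop := ∀ v n, Λ.IsVertex v → (Λ.vPn v n).Finite

/-- No sources: every vertex receives a path of each coordinate degree `e_i`. -/
def NoSources : Prop := ∀ v, Λ.IsVertex v → ∀ i : Fin k,
  (Λ.vPn v (Pi.single i 1)).Nonempty

/-- `vΛ^{≤ n}`. -/
def vPle (v : Λ.Path) (n : Fin k → ℕ) : Set Λ.Path :=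
  {p | Λ.rng p = v ∧ Λ.deg p ≤ n ∧
    ∀ i : Fin k, Λ.deg p i < n i → Λ.vPn (Λ.src p) (Pi.single i 1) = ∅}

/-- A set of vertices is hereditary if it is closed under taking sources of
paths out of it. -/
def Hereditary (H : Set Λ.Path) : Prop :=
  ∀ v ∈ H, ∀ p, Λ.rng p = v → Λ.src p ∈ H

/-- A set of vertices is saturated if any vertex admitting a finite
exhaustive set of paths with sources in `S` lies in `S`. -/
def Saturated (S : Set Λ.Path) : Prop :=
  ∀ v, Λ.IsVertex v →
    (∃ E : Set Λ.Path, E.Finite ∧ E ⊆ Λ.vP v ∧ Λ.Exhaustive v E ∧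
      ∀ p ∈ E, Λ.src p ∈ S) → v ∈ S

/-- The saturation `Σ(X)`: the smallest saturated hereditary set of vertices
containing `X`. -/
def saturation (X : Set Λ.Path) : Set Λ.Path :=
  ⋂₀ {S | X ⊆ S ∧ S ⊆ {v | Λ.IsVertex v} ∧ Λ.Hereditary S ∧ Λ.Saturated S}

end KGraph

namespace KGraph

variable {k : ℕ} (Λ : KGraph k)

variable {A : Type} [NormedRing A] [StarRing A] [CStarRing A]
  [NormedAlgebra ℂ A] [CompleteSpace A] [StarModule ℂ A]

/-- A Cuntz–Krieger `(Λ,X)`-family in a C*-algebra: partial isometries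
`T α β` indexed by pairs of paths with range in `X` and common source,
subject to the relations (i)–(iii) of Definition 3.1. The product relation
(iii) is stated for an arbitrary enumeration (without repetitions) of a
finite exhaustive set, since the factors commute. -/
def CKFamilyX (X : Set Λ.Path) (T : Λ.Path → Λ.Path → A) : Prop :=
  (∀ α β, Λ.rng α ∈ X → Λ.rng β ∈ X → Λ.src α = Λ.src β →
    T α β * star (T α β) * T α β = T α β) ∧
  (∀ α β, Λ.rng α ∈ X → Λ.rng β ∈ X → Λ.src α = Λ.src β →
    star (T α β) = T β α) ∧
  (∀ α β l m, Λ.rng α ∈ X → Λ.rng β ∈ X → Λ.rng l ∈ X → Λ.rng m ∈ X →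
    Λ.src α = Λ.src β → Λ.src l = Λ.src m →
    T α β * T l m =
      ∑ᶠ x : ↥(Λ.minExt β l), T (Λ.comp α (x : Λ.Path × Λ.Path).1)
        (Λ.comp m (x : Λ.Path × Λ.Path).2)) ∧
  (∀ v, v ∈ X → Λ.IsVertex v → ∀ L : List Λ.Path, L.Nodup →
    {l | l ∈ L} ⊆ Λ.vP v → Λ.Exhaustive v {l | l ∈ L} →
    (L.map (fun l => T v v - T l l)).prod = 0)

/-- A Cuntz–Krieger `Λ`-family supported on a subset `S` of the paths of
`Λ` (taking `S` to be all paths gives the usual notion, Definition 2.9). -/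
def CKLambdaFamilyOn (S : Set Λ.Path) (s : Λ.Path → A) : Prop :=
  (∀ v, v ∈ S → Λ.IsVertex v → s v * s v = s v ∧ star (s v) = s v) ∧
  (∀ v w, v ∈ S → w ∈ S → Λ.IsVertex v → Λ.IsVertex w → v ≠ w →
    s v * s w = 0) ∧
  (∀ p q, p ∈ S → q ∈ S → Λ.src p = Λ.rng q → s p * s q = s (Λ.comp p q)) ∧
  (∀ p q, p ∈ S → q ∈ S →
    star (s p) * s q =
      ∑ᶠ x : ↥(Λ.minExt p q), s (x : Λ.Path × Λ.Path).1 *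
        star (s (x : Λ.Path × Λ.Path).2)) ∧
  (∀ v, v ∈ S → Λ.IsVertex v → ∀ L : List Λ.Path, L.Nodup →
    {l | l ∈ L} ⊆ Λ.vP v ∩ S → Λ.Exhaustive v {l | l ∈ L} →
    (L.map (fun l => s v - s l * star (s l))).prod = 0)

/-- A Cuntz–Krieger `Λ`-family. -/
def CKLambdaFamily (s : Λ.Path → A) : Prop :=
  Λ.CKLambdaFamilyOn Set.univ s

/-- The gauge-action scalar `z^{d(α) - d(β)}`. -/
noncomputable def gaugeScalar (z : Fin k → ℂ) (m n : Fin k → ℕ) : ℂ :=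
  ∏ i : Fin k, z i ^ ((m i : ℤ) - (n i : ℤ))

/-- The generated C*-algebra is the closed span of the `T α β`. -/
def GeneratedByX (X : Set Λ.Path) (T : Λ.Path → Λ.Path → A) : Prop :=
  closure (↑(Submodule.span ℂ
    {a : A | ∃ α β, Λ.rng α ∈ X ∧ Λ.rng β ∈ X ∧ Λ.src α = Λ.src β ∧
      a = T α β}) : Set A) = Set.univ

/-- Universality: every Cuntz–Krieger `(Λ,X)`-family in any C*-algebra is
the image of `T` under a unique star-algebra homomorphism. -/
def UniversalX (X : Set Λ.Path) (T : Λ.Path → Λ.Path → A) : Prop :=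
  ∀ (B : Type) (_ : NormedRing B) (_ : StarRing B) (_ : CStarRing B)
    (_ : NormedAlgebra ℂ B) (_ : CompleteSpace B) (_ : StarModule ℂ B)
    (t : Λ.Path → Λ.Path → B), Λ.CKFamilyX X t →
    ∃! φ : A →⋆ₐ[ℂ] B,
      ∀ α β, Λ.rng α ∈ X → Λ.rng β ∈ X → Λ.src α = Λ.src β →
        φ (T α β) = t α β

end KGraph

namespace KGraph

variable {k : ℕ} (Λ : KGraph k)

variable {A : Type} [NormedRing A] [StarRing A] [CStarRing A]
  [NormedAlgebra ℂ A] [CompleteSpace A] [StarModule ℂ A]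

/-- The C*-algebra of a Cuntz–Krieger `Λ`-family supported on `S` is
generated by the family: the closed span of the `s_α s_β^*` is everything. -/
def GeneratedLambdaOn (S : Set Λ.Path) (s : Λ.Path → A) : Prop :=
  closure (↑(Submodule.span ℂ
    {a : A | ∃ p q, p ∈ S ∧ q ∈ S ∧ Λ.src p = Λ.src q ∧
      a = s p * star (s q)}) : Set A) = Set.univ

/-- Universality of a Cuntz–Krieger `Λ`-family supported on `S`. -/
def UniversalLambdaOn (S : Set Λ.Path) (s : Λ.Path → A) : Prop :=
  ∀ (B : Type) (_ : NormedRing B) (_ : StarRing B) (_ : CStarRing B)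
    (_ : NormedAlgebra ℂ B) (_ : CompleteSpace B) (_ : StarModule ℂ B)
    (t : Λ.Path → B), Λ.CKLambdaFamilyOn S t →
    ∃! φ : A →⋆ₐ[ℂ] B, ∀ p ∈ S, φ (s p) = t p

/-- Universality of a Cuntz–Krieger `Λ`-family (`C*(Λ)`). -/
def UniversalLambda (s : Λ.Path → A) : Prop :=
  Λ.UniversalLambdaOn Set.univ s

/-- The closed two-sided ideal of `A` generated by the projections
`{s_v : v ∈ X}` is all of `A`; this says exactly that the corner
`P_X A P_X` is full. -/
def FullCornerIdeal (X : Set Λ.Path) (s : Λ.Path → A) : Prop :=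
  closure (↑(Submodule.span ℂ
    {x : A | ∃ v ∈ X, ∃ a b : A,
      x = a * s v * b ∨ x = a * s v ∨ x = s v * b ∨ x = s v}) : Set A) =
    Set.univ

end KGraph

/-!
Every relation for `t_λ = T_{λ,s(λ)}` is an instance of the product relation of the
`(Λ,Λ^0)`-family in which one of the two middle paths is a vertex, and minimal common
extensions with a vertex are trivial: `Λ^min(r(q), q) = {(q, s(q))}`, and
`Λ^min(v, w) = ∅` for distinct vertices. In particular `t_α t_β^* = T_{α,β}`, so the
Cuntz–Krieger relation for the `t_λ` is the one for the `T_{α,β}`.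
-/

namespace KGraph

variable {k : ℕ} (Λ : KGraph k)

lemma isVertex_src (p : Λ.Path) : Λ.IsVertex (Λ.src p) :=
  ⟨Λ.src_src p, Λ.rng_src p, Λ.deg_src p⟩

lemma isVertex_rng (p : Λ.Path) : Λ.IsVertex (Λ.rng p) :=
  ⟨Λ.src_rng p, Λ.rng_rng p, Λ.deg_rng p⟩

/-- Unique factorisation of `p` into two paths of degree `0` gives `(r(p), p) = (p, s(p))`. -/
lemma isVertex_of_deg_eq_zero {p : Λ.Path} (h : Λ.deg p = 0) : Λ.IsVertex p := by
  obtain ⟨x, -, hx⟩ := Λ.factor p 0 0 (by simp [h])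
  have hrng : (Λ.rng p, p) = x :=
    hx _ ⟨Λ.deg_rng p, h, Λ.src_rng p, (Λ.id_comp p).symm⟩
  have hsrc : (p, Λ.src p) = x :=
    hx _ ⟨h, Λ.deg_src p, (Λ.rng_src p).symm, (Λ.comp_id p).symm⟩
  obtain ⟨hp, hs⟩ : p = Λ.rng p ∧ Λ.src p = p := Prod.ext_iff.mp (hsrc.trans hrng.symm)
  exact ⟨hs, hp.symm, h⟩

lemma comp_of_src_eq_rng {p q : Λ.Path} (h : Λ.src p = Λ.rng q) (hp : Λ.IsVertex p) :
    Λ.comp p q = q := by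
  rw [← hp.1, h, Λ.id_comp]

lemma minExt_rng_left (q : Λ.Path) : Λ.minExt (Λ.rng q) q = {(q, Λ.src q)} := by
  ext ⟨x, y⟩
  simp only [minExt, Set.mem_ofPred_eq, Set.mem_singleton_iff, Prod.mk.injEq, Λ.src_rng,
    Λ.deg_rng, zero_add, zero_le, sup_of_le_right]
  constructor
  · rintro ⟨hx, hy, hxy, hdeg⟩
    rw [hx, Λ.id_comp] at hxy
    have hy0 : Λ.deg y = 0 := by
      have := Λ.deg_comp q y hy
      rw [← hxy, hdeg] at this
      exact left_eq_add.mp this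
    have hy' : y = Λ.src q := by rw [hy, (Λ.isVertex_of_deg_eq_zero hy0).2.1]
    exact ⟨by rw [hxy, hy', Λ.comp_id], hy'⟩
  · rintro ⟨rfl, rfl⟩
    exact ⟨rfl, (Λ.rng_src x).symm, by rw [Λ.id_comp, Λ.comp_id], rfl⟩

lemma minExt_eq_empty_of_isVertex {v w : Λ.Path} (hv : Λ.IsVertex v) (hw : Λ.IsVertex w)
    (hne : v ≠ w) : Λ.minExt v w = ∅ := by
  refine Set.eq_empty_of_forall_notMem fun x ⟨hx, hy, hxy, _⟩ => hne ?_
  rw [Λ.comp_of_src_eq_rng hx hv, Λ.comp_of_src_eq_rng hy hw] at hxy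
  rw [← hv.1, hx, hxy, ← hy, hw.1]

end KGraph

namespace KGraph.CKFamilyX

variable {k : ℕ} {Λ : KGraph k} {A : Type} [NormedRing A] [StarRing A]
  {X : Set Λ.Path} {T : Λ.Path → Λ.Path → A}

lemma star_apply_src (hT : Λ.CKFamilyX X T) {p : Λ.Path} (hp : Λ.rng p ∈ X)
    (hs : Λ.src p ∈ X) : star (T p (Λ.src p)) = T (Λ.src p) p :=
  hT.2.1 p (Λ.src p) hp (by rwa [Λ.rng_src]) (Λ.src_src p).symm

lemma mul_rng (hT : Λ.CKFamilyX X T) {α q m : Λ.Path} (hα : Λ.src α = Λ.rng q)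
    (hqm : Λ.src q = Λ.src m) (hαX : Λ.rng α ∈ X) (hqX : Λ.rng q ∈ X) (hmX : Λ.rng m ∈ X) :
    T α (Λ.rng q) * T q m = T (Λ.comp α q) m := by
  rw [hT.2.2.1 α (Λ.rng q) q m hαX (by rwa [Λ.rng_rng]) hqX hmX (by rw [hα, Λ.src_rng]) hqm,
    Λ.minExt_rng_left, finsum_unique]
  change T (Λ.comp α q) (Λ.comp m (Λ.src q)) = _
  rw [hqm, Λ.comp_id]

lemma mul_star_of_src_eq (hT : Λ.CKFamilyX X T) {α β : Λ.Path} (h : Λ.src α = Λ.src β)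
    (hαX : Λ.rng α ∈ X) (hβX : Λ.rng β ∈ X) (hsX : Λ.src β ∈ X) :
    T α (Λ.src α) * star (T β (Λ.src β)) = T α β := by
  have hsX' : Λ.rng (Λ.src β) ∈ X := by rwa [Λ.rng_src]
  have key := hT.mul_rng (by rw [h, Λ.rng_src]) (Λ.src_src β) hαX hsX' hβX
  rw [Λ.rng_src] at key
  rw [hT.star_apply_src hβX hsX, h, key, ← h, Λ.comp_id]

lemma mul_self_of_isVertex (hT : Λ.CKFamilyX X T) {v : Λ.Path} (hv : Λ.IsVertex v)
    (hvX : v ∈ X) : T v v * T v v = T v v := by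
  have hvX' : Λ.rng v ∈ X := by rwa [hv.2.1]
  simpa only [hv.2.1, Λ.comp_of_src_eq_rng (hv.1.trans hv.2.1.symm) hv] using
    hT.mul_rng (hv.1.trans hv.2.1.symm) rfl hvX' hvX' hvX'

lemma mul_eq_zero_of_isVertex_ne (hT : Λ.CKFamilyX X T) {v w : Λ.Path} (hv : Λ.IsVertex v)
    (hw : Λ.IsVertex w) (hvX : v ∈ X) (hwX : w ∈ X) (hne : v ≠ w) : T v v * T w w = 0 := by
  have hvX' : Λ.rng v ∈ X := by rwa [hv.2.1]
  have hwX' : Λ.rng w ∈ X := by rwa [hw.2.1]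
  rw [hT.2.2.1 v v w w hvX' hvX' hwX' hwX' rfl rfl, Λ.minExt_eq_empty_of_isVertex hv hw hne]
  exact finsum_of_isEmpty _

lemma star_mul_eq_finsum (hT : Λ.CKFamilyX {v | Λ.IsVertex v} T) (p q : Λ.Path) :
    star (T p (Λ.src p)) * T q (Λ.src q) =
      ∑ᶠ x : ↥(Λ.minExt p q), T (x : Λ.Path × Λ.Path).1 (Λ.src (x : Λ.Path × Λ.Path).1) *
        star (T (x : Λ.Path × Λ.Path).2 (Λ.src (x : Λ.Path × Λ.Path).2)) := by
  have hV : ∀ p : Λ.Path, Λ.rng p ∈ {v | Λ.IsVertex v} := Λ.isVertex_rng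
  rw [hT.star_apply_src (hV p) (Λ.isVertex_src p),
    hT.2.2.1 (Λ.src p) p q (Λ.src q) (hV _) (hV p) (hV q) (hV _) (Λ.src_src p) (Λ.src_src q).symm]
  refine finsum_congr fun ⟨⟨x, y⟩, hx, hy, hxy, _⟩ => ?_
  rw [Λ.comp_of_src_eq_rng ((Λ.src_src p).trans hx) (Λ.isVertex_src p),
    Λ.comp_of_src_eq_rng ((Λ.src_src q).trans hy) (Λ.isVertex_src q)]
  have hsrc : Λ.src x = Λ.src y := by
    rw [← Λ.src_comp p x hx, ← Λ.src_comp q y hy, hxy]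
  exact (hT.mul_star_of_src_eq hsrc (hV x) (hV y) (Λ.isVertex_src y)).symm

end KGraph.CKFamilyX

theorem KGraph.ckFamilyX_gives_ckLambdaFamily_general {k : ℕ} (Λ : KGraph k)
    {A : Type} [NormedRing A] [StarRing A]
    (T : Λ.Path → Λ.Path → A)
    (hT : Λ.CKFamilyX {v | Λ.IsVertex v} T) :
    Λ.CKLambdaFamily (fun p => T p (Λ.src p)) := by
  have hV : ∀ p : Λ.Path, Λ.rng p ∈ {v | Λ.IsVertex v} := Λ.isVertex_rng
  refine ⟨fun v _ hv => ?_, fun v w _ _ hv hw hne => ?_, fun p q _ _ hpq => ?_,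
    fun p q _ _ => hT.star_mul_eq_finsum p q, fun v _ hv L hL hsub hexh => ?_⟩
  · simp only [hv.1]
    exact ⟨hT.mul_self_of_isVertex hv hv, hT.2.1 v v (hV v) (hV v) rfl⟩
  · simp only [hv.1, hw.1]
    exact hT.mul_eq_zero_of_isVertex_ne hv hw hv hw hne
  · simp only [hpq]
    rw [hT.mul_rng hpq (Λ.src_src q).symm (hV p) (hV q) (hV _), Λ.src_comp p q hpq]
  · have hproj : ∀ l ∈ L, T v (Λ.src v) - T l (Λ.src l) * star (T l (Λ.src l)) = T v v - T l l :=
      fun l _ => by rw [hv.1, hT.mul_star_of_src_eq rfl (hV l) (hV l) (Λ.isVertex_src l)]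
    simp only [List.map_congr_left hproj]
    exact hT.2.2.2 v hv hv L hL (fun l hl => (hsub hl).1) hexh

/-- If `{T_{α,β}}` is a Cuntz–Krieger `(Λ,Λ^0)`-family then
`t_λ := T_{λ,s(λ)}` defines a Cuntz–Krieger `Λ`-family: the vertex
projections are mutually orthogonal, `t_λ t_μ = t_{λμ}` for composable
paths, `t_λ^* t_μ = Σ_{(α,β)∈Λ^min(λ,μ)} t_α t_β^*`, and
`Π_{λ∈E}(t_v − t_λ t_λ^*) = 0` for finite exhaustive `E ⊆ vΛ`. -/
theorem KGraph.ckFamilyX_gives_ckLambdaFamily {k : ℕ} (Λ : KGraph k)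
    (hFA : Λ.FinitelyAligned)
    {A : Type} [NormedRing A] [StarRing A] [CStarRing A]
    [NormedAlgebra ℂ A] [CompleteSpace A] [StarModule ℂ A]
    (T : Λ.Path → Λ.Path → A)
    (hT : Λ.CKFamilyX {v | Λ.IsVertex v} T) :
    Λ.CKLambdaFamily (fun p => T p (Λ.src p)) :=
  KGraph.ckFamilyX_gives_ckLambdaFamily_general Λ T hT
end

section
/- Let Λ be a finitely aligned k-graph with X ⊆ Λ^0. For any finite set F of spanning elements T_{α,β} with d(α)=d(β) in the core of C*(Λ,X), there exists a finite set F̄ ⊇ F of such spanning elements whose linear span is closed under multiplication and adjoints; consequently C*(F) is finite dimensional. -/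
open scoped BigOperators

/-!
`F̄` is the smallest set of index pairs containing `F` that is closed under `(a, b) ↦ (b, a)`
(adjoints) and under `(a, b), (c, d) ↦ (a x₁, d x₂)` for `x ∈ Λ^min(b, c)` (the product formula);
its span is then a *-algebra, and everything reduces to `F̄` being finite.

Degrees in `F̄` are bounded by those in `F`, so it suffices that each degree level is finite,
which is proved by well-founded induction on the degree `m`. Every component of degree `m` of a
pair of `F̄` is a component of `F`, a minimal common extension of components of lower pairs, or
is obtained from one of these by replacing an initial segment `q₁` by `q₂` for a lower pair
`(q₁, q₂)`: replacing twice is replacing once by a lower pair or lands on a minimal common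
extension, by factoring the common extension `q₂ y = r₁ y'` through `Λ^min(q₂, r₁)`. Finite
alignment makes the second kind finite, unique factorisation the third.
-/

namespace KGraph

variable {k : ℕ} {Λ : KGraph k}

lemma rng_eq_self_of_deg_eq_zero {p : Λ.Path} (hp : Λ.deg p = 0) : Λ.rng p = p := by
  have hf := Λ.factor p 0 0 (by simpa using hp)
  exact congrArg Prod.fst <| hf.unique (y₁ := (Λ.rng p, p)) (y₂ := (p, Λ.src p))
    ⟨Λ.deg_rng p, hp, Λ.src_rng p, (Λ.id_comp p).symm⟩
    ⟨hp, Λ.deg_src p, (Λ.rng_src p).symm, (Λ.comp_id p).symm⟩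

lemma comp_eq_self_of_deg_eq_zero {p x : Λ.Path} (hx : Λ.deg x = 0)
    (hpx : Λ.src p = Λ.rng x) : Λ.comp p x = p := by
  rw [← rng_eq_self_of_deg_eq_zero hx, ← hpx, Λ.comp_id]

lemma eq_and_eq_of_comp_eq_comp {h t h' t' : Λ.Path} (ht : Λ.src h = Λ.rng t)
    (ht' : Λ.src h' = Λ.rng t') (hdeg : Λ.deg h = Λ.deg h')
    (heq : Λ.comp h t = Λ.comp h' t') : h = h' ∧ t = t' := by
  have hdt : Λ.deg t = Λ.deg t' := by
    have := Λ.deg_comp h t ht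
    rwa [heq, Λ.deg_comp h' t' ht', hdeg, add_right_inj, eq_comm] at this
  exact Prod.mk.inj <| (Λ.factor _ _ _ (Λ.deg_comp h t ht)).unique (y₁ := (h, t))
    (y₂ := (h', t')) ⟨rfl, rfl, ht, rfl⟩ ⟨hdeg.symm, hdt.symm, ht', heq⟩

lemma exists_comp_of_le_deg {p : Λ.Path} {n : Fin k → ℕ} (hn : n ≤ Λ.deg p) :
    ∃ h t, Λ.deg h = n ∧ Λ.src h = Λ.rng t ∧ p = Λ.comp h t := by
  obtain ⟨x, hx, -⟩ := Λ.factor p n (Λ.deg p - n) (add_tsub_cancel_of_le hn).symm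
  exact ⟨x.1, x.2, hx.1, hx.2.2⟩

lemma exists_eq_comp_of_comp_eq_comp {a y h t : Λ.Path} (hay : Λ.src a = Λ.rng y)
    (hht : Λ.src h = Λ.rng t) (heq : Λ.comp a y = Λ.comp h t) (hle : Λ.deg a ≤ Λ.deg h) :
    ∃ u, Λ.src a = Λ.rng u ∧ Λ.src u = Λ.rng t ∧ h = Λ.comp a u ∧ y = Λ.comp u t := by
  obtain ⟨a', u, hdeg, ha'u, rfl⟩ := exists_comp_of_le_deg hle
  have hut : Λ.src u = Λ.rng t := by rwa [Λ.src_comp a' u ha'u] at hht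
  rw [Λ.comp_assoc a' u t ha'u hut] at heq
  obtain ⟨rfl, rfl⟩ := eq_and_eq_of_comp_eq_comp hay (by rwa [Λ.rng_comp u t hut])
    hdeg.symm heq
  exact ⟨u, ha'u, hut, rfl, rfl⟩

lemma exists_mem_minExt_of_comp_eq_comp {a b y z : Λ.Path} (hay : Λ.src a = Λ.rng y)
    (hbz : Λ.src b = Λ.rng z) (heq : Λ.comp a y = Λ.comp b z) :
    ∃ x ∈ Λ.minExt a b, ∃ t, Λ.src x.1 = Λ.rng t ∧ Λ.src x.2 = Λ.rng t ∧
      y = Λ.comp x.1 t ∧ z = Λ.comp x.2 t := by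
  have hle : Λ.deg a ⊔ Λ.deg b ≤ Λ.deg (Λ.comp a y) := by
    refine sup_le ?_ ?_
    · rw [Λ.deg_comp a y hay]; exact le_self_add
    · rw [heq, Λ.deg_comp b z hbz]; exact le_self_add
  obtain ⟨h, t, hdeg, hht, he⟩ := exists_comp_of_le_deg hle
  obtain ⟨u, hau, hut, rfl, rfl⟩ :=
    exists_eq_comp_of_comp_eq_comp hay hht he (hdeg ▸ le_sup_left)
  obtain ⟨v, hbv, hvt, hv, rfl⟩ :=
    exists_eq_comp_of_comp_eq_comp hbz hht (heq.symm.trans he) (hdeg ▸ le_sup_right)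
  exact ⟨(u, v), ⟨hau, hbv, hv, by rw [← Λ.deg_comp a u hau, hdeg]⟩, t, hut, hvt, rfl, rfl⟩

lemma deg_add_deg_snd_of_mem_minExt {a b : Λ.Path} {x : Λ.Path × Λ.Path}
    (hx : x ∈ Λ.minExt a b) : Λ.deg b + Λ.deg x.2 = Λ.deg a ⊔ Λ.deg b := by
  rw [← hx.2.2.2, ← Λ.deg_comp a x.1 hx.1, ← Λ.deg_comp b x.2 hx.2.1, hx.2.2.1]

def Balanced (p : Λ.Path × Λ.Path) : Prop :=
  Λ.src p.1 = Λ.src p.2 ∧ Λ.deg p.1 = Λ.deg p.2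

lemma Balanced.deg_comp_fst {a b c : Λ.Path} {x : Λ.Path × Λ.Path} (hab : Λ.Balanced (a, b))
    (hx : x ∈ Λ.minExt b c) : Λ.deg (Λ.comp a x.1) = Λ.deg b ⊔ Λ.deg c := by
  rw [Λ.deg_comp a x.1 (hab.1.trans hx.1), hab.2, hx.2.2.2]

lemma Balanced.child {a b c d : Λ.Path} {x : Λ.Path × Λ.Path} (hab : Λ.Balanced (a, b))
    (hcd : Λ.Balanced (c, d)) (hx : x ∈ Λ.minExt b c) :
    Λ.Balanced (Λ.comp a x.1, Λ.comp d x.2) := by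
  have hdx : Λ.src d = Λ.rng x.2 := hcd.1.symm.trans hx.2.1
  refine ⟨?_, ?_⟩
  · rw [Λ.src_comp a x.1 (hab.1.trans hx.1), Λ.src_comp d x.2 hdx, ← Λ.src_comp b x.1 hx.1,
      ← Λ.src_comp c x.2 hx.2.1, hx.2.2.1]
  · rw [hab.deg_comp_fst hx, Λ.deg_comp d x.2 hdx, ← hcd.2, deg_add_deg_snd_of_mem_minExt hx]

variable (Λ) in
inductive PairClosure (F : Set (Λ.Path × Λ.Path)) : Λ.Path × Λ.Path → Prop
  | base {x} : x ∈ F → PairClosure F x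
  | swap {a b} : PairClosure F (a, b) → PairClosure F (b, a)
  | child {a b c d} {x : Λ.Path × Λ.Path} : PairClosure F (a, b) → PairClosure F (c, d) →
      x ∈ Λ.minExt b c → PairClosure F (Λ.comp a x.1, Λ.comp d x.2)

namespace PairClosure

variable {F : Set (Λ.Path × Λ.Path)}

lemma balanced (hF : ∀ x ∈ F, Λ.Balanced x) {p : Λ.Path × Λ.Path}
    (hp : Λ.PairClosure F p) : Λ.Balanced p := by
  induction hp with
  | base hx => exact hF _ hx
  | swap _ ih => exact ⟨ih.1.symm, ih.2.symm⟩
  | child _ _ hx ih₁ ih₂ => exact ih₁.child ih₂ hx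

lemma rng_mem {X : Set Λ.Path} (hF : ∀ x ∈ F, Λ.Balanced x)
    (hFX : ∀ x ∈ F, Λ.rng x.1 ∈ X ∧ Λ.rng x.2 ∈ X) {p : Λ.Path × Λ.Path}
    (hp : Λ.PairClosure F p) : Λ.rng p.1 ∈ X ∧ Λ.rng p.2 ∈ X := by
  induction hp with
  | base hx => exact hFX _ hx
  | swap _ ih => exact ih.symm
  | child hab hcd hx ih₁ ih₂ =>
    rw [Λ.rng_comp _ _ ((hab.balanced hF).1.trans hx.1),
      Λ.rng_comp _ _ ((hcd.balanced hF).1.symm.trans hx.2.1)]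
    exact ⟨ih₁.1, ih₂.2⟩

lemma deg_fst_le (hF : ∀ x ∈ F, Λ.Balanced x) {N : Fin k → ℕ}
    (hN : ∀ x ∈ F, Λ.deg x.1 ≤ N) {p : Λ.Path × Λ.Path} (hp : Λ.PairClosure F p) :
    Λ.deg p.1 ≤ N := by
  induction hp with
  | base hx => exact hN _ hx
  | swap hab ih => exact (hab.balanced hF).2 ▸ ih
  | child hab hcd hx ih₁ ih₂ =>
    rw [(hab.balanced hF).deg_comp_fst hx, ← (hab.balanced hF).2]
    exact sup_le ih₁ ih₂

end PairClosure

variable (Λ) in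
def transport (P : Set (Λ.Path × Λ.Path)) (W : Set Λ.Path) : Set Λ.Path :=
  {c | ∃ q ∈ P, ∃ y, Λ.src q.1 = Λ.rng y ∧ Λ.comp q.1 y ∈ W ∧ c = Λ.comp q.2 y}

variable (Λ) in
def minExtSet (S : Set Λ.Path) : Set Λ.Path :=
  {e | ∃ a ∈ S, ∃ b ∈ S, ∃ x ∈ Λ.minExt a b, e = Λ.comp a x.1}

lemma finite_transport {P : Set (Λ.Path × Λ.Path)} {W : Set Λ.Path} (hP : P.Finite)
    (hW : W.Finite) : (Λ.transport P W).Finite := by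
  have htail : ∀ h w, {y | Λ.src h = Λ.rng y ∧ Λ.comp h y = w}.Subsingleton :=
    fun h w y hy y' hy' => (eq_and_eq_of_comp_eq_comp hy.1 hy'.1 rfl (hy.2.trans hy'.2.symm)).2
  refine (hP.biUnion fun q _ => hW.biUnion fun w _ => ((htail q.1 w).finite.image
    (Λ.comp q.2))).subset ?_
  rintro _ ⟨q, hq, y, hy, hyW, rfl⟩
  exact Set.mem_biUnion hq (Set.mem_biUnion hyW ⟨y, ⟨hy, rfl⟩, rfl⟩)

lemma finite_minExtSet (hFA : Λ.FinitelyAligned) {S : Set Λ.Path} (hS : S.Finite) :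
    (Λ.minExtSet S).Finite := by
  refine (hS.biUnion fun a _ => hS.biUnion fun b _ => (hFA a b).image
    fun x => Λ.comp a x.1).subset ?_
  rintro _ ⟨a, ha, b, hb, x, hx, rfl⟩
  exact Set.mem_biUnion ha (Set.mem_biUnion hb ⟨x, hx, rfl⟩)

section Level

variable {F : Set (Λ.Path × Λ.Path)} {m : Fin k → ℕ}

variable (Λ F m)

def lowPairs : Set (Λ.Path × Λ.Path) := {p | Λ.PairClosure F p ∧ Λ.deg p.1 < m}

def levelSeeds : Set Λ.Path :=
  Prod.fst '' F ∪ Prod.snd '' F ∪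
    Λ.minExtSet (Prod.fst '' Λ.lowPairs F m ∪ Prod.snd '' Λ.lowPairs F m)

def levelSupport : Set Λ.Path :=
  Λ.levelSeeds F m ∪ Λ.transport (Λ.lowPairs F m) (Λ.levelSeeds F m)

variable {Λ F m}

lemma finite_levelSupport (hFA : Λ.FinitelyAligned) (hF : F.Finite)
    (hlow : (Λ.lowPairs F m).Finite) : (Λ.levelSupport F m).Finite := by
  have hseeds : (Λ.levelSeeds F m).Finite :=
    ((hF.image _).union (hF.image _)).union
      (finite_minExtSet hFA ((hlow.image _).union (hlow.image _)))
  exact hseeds.union (finite_transport hlow hseeds)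

lemma comp_snd_mem_levelSupport (hbal : ∀ x ∈ F, Λ.Balanced x) {c y : Λ.Path}
    {r : Λ.Path × Λ.Path} (hc : c ∈ Λ.levelSupport F m) (hcm : Λ.deg c = m)
    (hr : r ∈ Λ.lowPairs F m) (hy : Λ.src r.1 = Λ.rng y) (hcy : c = Λ.comp r.1 y) :
    Λ.comp r.2 y ∈ Λ.levelSupport F m := by
  rcases hc with hc | ⟨q, hq, y', hy', hW, rfl⟩
  · exact Or.inr ⟨r, hr, y, hy, hcy ▸ hc, rfl⟩
  have hq_bal := hq.1.balanced hbal
  obtain ⟨x, hx, t, hxt₁, hxt₂, rfl, rfl⟩ :=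
    exists_mem_minExt_of_comp_eq_comp (hq_bal.1.symm.trans hy') hy hcy
  by_cases hm : Λ.deg q.2 ⊔ Λ.deg r.1 = m
  · -- `t` is a vertex, so `c = q.2 x.1` is itself a minimal common extension
    have ht : Λ.deg t = 0 := by
      rwa [Λ.deg_comp _ _ (hq_bal.1.symm.trans hy'), Λ.deg_comp _ _ hxt₁, ← add_assoc,
        hx.2.2.2, hm, add_eq_left] at hcm
    rw [comp_eq_self_of_deg_eq_zero ht hxt₂]
    refine Or.inr ⟨r, hr, x.2, hx.2.1, Or.inr ⟨q.2, Or.inr ⟨q, hq, rfl⟩, r.1,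
      Or.inl ⟨r, hr, rfl⟩, x, hx, hx.2.2.1.symm⟩, rfl⟩
  · have hlow : (Λ.comp q.1 x.1, Λ.comp r.2 x.2) ∈ Λ.lowPairs F m := by
      refine ⟨.child hq.1 hr.1 hx, ?_⟩
      rw [hq_bal.deg_comp_fst hx]
      exact lt_of_le_of_ne (sup_le (hq_bal.2 ▸ hq.2.le) hr.2.le) hm
    have hr_bal := hr.1.balanced hbal
    have hr₂x : Λ.src r.2 = Λ.rng x.2 := hr_bal.1.symm.trans hx.2.1
    have hq₁x : Λ.src q.1 = Λ.rng x.1 := hq_bal.1.trans hx.1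
    refine Or.inr ⟨_, hlow, t, ?_, ?_, ?_⟩
    · rwa [Λ.src_comp _ _ hq₁x]
    · rwa [Λ.comp_assoc _ _ _ hq₁x hxt₁]
    · rw [Λ.comp_assoc _ _ _ hr₂x hxt₂]

lemma comp_fst_mem_levelSupport (hbal : ∀ x ∈ F, Λ.Balanced x) {a b y : Λ.Path}
    (hab : Λ.PairClosure F (a, b)) (ha : Λ.deg a = m → a ∈ Λ.levelSupport F m)
    (hby : Λ.src b = Λ.rng y) (he : Λ.comp b y ∈ Λ.levelSupport F m)
    (hem : Λ.deg (Λ.comp b y) = m) : Λ.comp a y ∈ Λ.levelSupport F m := by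
  have hab_bal := hab.balanced hbal
  by_cases hbm : Λ.deg b = m
  · have hy : Λ.deg y = 0 := by rwa [Λ.deg_comp _ _ hby, hbm, add_eq_left] at hem
    rw [comp_eq_self_of_deg_eq_zero hy (hab_bal.1.trans hby)]
    exact ha (hab_bal.2.trans hbm)
  · have hbm' : Λ.deg b < m := by
      refine lt_of_le_of_ne ?_ hbm
      rw [← hem, Λ.deg_comp _ _ hby]
      exact le_self_add
    exact comp_snd_mem_levelSupport hbal he hem (r := (b, a)) ⟨hab.swap, hbm'⟩ hby rfl

lemma mem_levelSupport_of_pairClosure (hbal : ∀ x ∈ F, Λ.Balanced x)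
    {p : Λ.Path × Λ.Path} (hp : Λ.PairClosure F p) (hpm : Λ.deg p.1 = m) :
    p.1 ∈ Λ.levelSupport F m ∧ p.2 ∈ Λ.levelSupport F m := by
  induction hp with
  | base hx =>
    exact ⟨Or.inl (Or.inl (Or.inl ⟨_, hx, rfl⟩)), Or.inl (Or.inl (Or.inr ⟨_, hx, rfl⟩))⟩
  | swap hab ih => exact (ih ((hab.balanced hbal).2.trans hpm)).symm
  | @child a b c d x hab hcd hx ih₁ ih₂ =>
    have hab_bal := hab.balanced hbal
    have hcd_bal := hcd.balanced hbal
    rw [hab_bal.deg_comp_fst hx] at hpm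
    have hem : Λ.deg (Λ.comp b x.1) = m := by rw [Λ.deg_comp _ _ hx.1, hx.2.2.2, hpm]
    have he : Λ.comp b x.1 ∈ Λ.levelSupport F m := by
      by_cases hbm : Λ.deg b = m
      · have hx₁ : Λ.deg x.1 = 0 := by rwa [Λ.deg_comp _ _ hx.1, hbm, add_eq_left] at hem
        rw [comp_eq_self_of_deg_eq_zero hx₁ hx.1]
        exact (ih₁ (hab_bal.2.trans hbm)).2
      by_cases hcm : Λ.deg c = m
      · have hx₂ : Λ.deg x.2 = 0 := by
          rwa [hx.2.2.1, Λ.deg_comp _ _ hx.2.1, hcm, add_eq_left] at hem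
        rw [hx.2.2.1, comp_eq_self_of_deg_eq_zero hx₂ hx.2.1]
        exact (ih₂ hcm).1
      have hb : (a, b) ∈ Λ.lowPairs F m :=
        ⟨hab, lt_of_le_of_ne (hab_bal.2 ▸ hpm ▸ le_sup_left) (hab_bal.2 ▸ hbm)⟩
      have hc : (c, d) ∈ Λ.lowPairs F m := ⟨hcd, lt_of_le_of_ne (hpm ▸ le_sup_right) hcm⟩
      exact Or.inl (Or.inr ⟨b, Or.inr ⟨_, hb, rfl⟩, c, Or.inl ⟨_, hc, rfl⟩, x, hx, rfl⟩)
    exact ⟨comp_fst_mem_levelSupport hbal hab (fun h => (ih₁ h).1) hx.1 he hem,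
      comp_fst_mem_levelSupport hbal hcd.swap (fun h => (ih₂ (hcd_bal.2.trans h)).2) hx.2.1
        (hx.2.2.1 ▸ he) (hx.2.2.1 ▸ hem)⟩

end Level

lemma PairClosure.finite_level (hFA : Λ.FinitelyAligned) {F : Set (Λ.Path × Λ.Path)}
    (hF : F.Finite) (hbal : ∀ x ∈ F, Λ.Balanced x) (m : Fin k → ℕ) :
    {p | Λ.PairClosure F p ∧ Λ.deg p.1 = m}.Finite := by
  induction m using WellFoundedLT.induction with
  | _ m ih =>
  have hlow : (Λ.lowPairs F m).Finite :=
    ((Set.finite_Iio m).biUnion ih).subset fun p hp => Set.mem_biUnion hp.2 ⟨hp.1, rfl⟩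
  have hV := finite_levelSupport hFA hF hlow
  exact (hV.prod hV).subset fun p hp => mem_levelSupport_of_pairClosure hbal hp.1 hp.2

lemma PairClosure.finite (hFA : Λ.FinitelyAligned) {F : Set (Λ.Path × Λ.Path)}
    (hF : F.Finite) (hbal : ∀ x ∈ F, Λ.Balanced x) : {p | Λ.PairClosure F p}.Finite := by
  obtain ⟨N, hN⟩ := (hF.image fun x => Λ.deg x.1).bddAbove
  refine ((Set.finite_Iic N).biUnion fun m _ => finite_level hFA hF hbal m).subset ?_
  intro p hp
  exact Set.mem_biUnion (hp.deg_fst_le hbal fun x hx => hN ⟨x, hx, rfl⟩) ⟨hp, rfl⟩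

end KGraph

namespace Submodule

lemma mul_mem_span_of_forall_mul_mem_span {R A : Type*} [CommSemiring R] [Semiring A]
    [Algebra R A] {s : Set A} (hs : ∀ x ∈ s, ∀ y ∈ s, x * y ∈ span R s) {a b : A}
    (ha : a ∈ span R s) (hb : b ∈ span R s) : a * b ∈ span R s :=
  mul_le.mp (by rw [span_mul_span]; exact span_le.mpr (Set.mul_subset_iff.mpr hs)) a ha b hb

lemma star_mem_span_of_forall_star_mem_span {R M : Type*} [Semiring R] [Star R]
    [AddCommMonoid M] [StarAddMonoid M] [Module R M] [StarModule R M] {s : Set M}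
    (hs : ∀ x ∈ s, star x ∈ span R s) {a : M} (ha : a ∈ span R s) : star a ∈ span R s := by
  induction ha using span_induction with
  | mem x hx => exact hs x hx
  | zero => rw [star_zero]; exact zero_mem _
  | add x y _ _ hx hy => rw [star_add]; exact add_mem hx hy
  | smul c x _ hx => rw [star_smul]; exact smul_mem _ _ hx

end Submodule

lemma exists_finiteDimensional_nonUnitalStarSubalgebra {K A : Type*} [Field K]
    [StarRing K] [Ring A] [StarRing A] [Algebra K A] [StarModule K A] {s : Set A}
    (hs : s.Finite) (hmul : ∀ a ∈ Submodule.span K s, ∀ b ∈ Submodule.span K s,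
      a * b ∈ Submodule.span K s)
    (hstar : ∀ a ∈ Submodule.span K s, star a ∈ Submodule.span K s) :
    ∃ S : NonUnitalStarSubalgebra K A, FiniteDimensional K S ∧ s ⊆ S :=
  ⟨{ (Submodule.span K s).toNonUnitalSubalgebra fun a b ha hb => hmul a ha b hb with
      star_mem' := hstar _ },
    FiniteDimensional.span_of_finite K hs, Submodule.subset_span⟩

namespace KGraph.CKFamilyX

variable {k : ℕ} {Λ : KGraph k} {A : Type} [NormedRing A] [StarRing A] [NormedAlgebra ℂ A]
  {X : Set Λ.Path} {T : Λ.Path → Λ.Path → A} {P : Set (Λ.Path × Λ.Path)}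

lemma mul_mem_span (hT : Λ.CKFamilyX X T)
    (hPX : ∀ p ∈ P, Λ.rng p.1 ∈ X ∧ Λ.rng p.2 ∈ X ∧ Λ.src p.1 = Λ.src p.2)
    (hP : ∀ p ∈ P, ∀ q ∈ P, ∀ x ∈ Λ.minExt p.2 q.1, (Λ.comp p.1 x.1, Λ.comp q.2 x.2) ∈ P)
    {a b : A} (ha : a ∈ Submodule.span ℂ ((fun x => T x.1 x.2) '' P))
    (hb : b ∈ Submodule.span ℂ ((fun x => T x.1 x.2) '' P)) :
    a * b ∈ Submodule.span ℂ ((fun x => T x.1 x.2) '' P) := by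
  refine Submodule.mul_mem_span_of_forall_mul_mem_span ?_ ha hb
  rintro _ ⟨p, hp, rfl⟩ _ ⟨q, hq, rfl⟩
  obtain ⟨hp₁, hp₂, hp_src⟩ := hPX p hp
  obtain ⟨hq₁, hq₂, hq_src⟩ := hPX q hq
  rw [hT.2.2.1 _ _ _ _ hp₁ hp₂ hq₁ hq₂ hp_src hq_src]
  exact finsum_induction _ (zero_mem _) (fun _ _ => add_mem)
    fun x => Submodule.subset_span ⟨_, hP p hp q hq x.1 x.2, rfl⟩

lemma star_mem_span [StarModule ℂ A] (hT : Λ.CKFamilyX X T)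
    (hPX : ∀ p ∈ P, Λ.rng p.1 ∈ X ∧ Λ.rng p.2 ∈ X ∧ Λ.src p.1 = Λ.src p.2)
    (hP : ∀ p ∈ P, p.swap ∈ P) {a : A} (ha : a ∈ Submodule.span ℂ ((fun x => T x.1 x.2) '' P)) :
    star a ∈ Submodule.span ℂ ((fun x => T x.1 x.2) '' P) := by
  refine Submodule.star_mem_span_of_forall_star_mem_span ?_ ha
  rintro _ ⟨p, hp, rfl⟩
  obtain ⟨hp₁, hp₂, hp_src⟩ := hPX p hp
  rw [hT.2.1 _ _ hp₁ hp₂ hp_src]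
  exact Submodule.subset_span ⟨_, hP p hp, rfl⟩

end KGraph.CKFamilyX

theorem KGraph.core_finitely_generated_finite_dimensional_general {k : ℕ}
    (Λ : KGraph k) (hFA : Λ.FinitelyAligned)
    {A : Type} [NormedRing A] [StarRing A]
    [NormedAlgebra ℂ A] [StarModule ℂ A]
    (X : Set Λ.Path) (T : Λ.Path → Λ.Path → A) (hT : Λ.CKFamilyX X T)
    (F : Finset (Λ.Path × Λ.Path))
    (hF : ∀ x ∈ F, Λ.rng x.1 ∈ X ∧ Λ.rng x.2 ∈ X ∧
      Λ.src x.1 = Λ.src x.2 ∧ Λ.deg x.1 = Λ.deg x.2) :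
    ∃ Fbar : Finset (Λ.Path × Λ.Path), F ⊆ Fbar ∧
      (∀ x ∈ Fbar, Λ.rng x.1 ∈ X ∧ Λ.rng x.2 ∈ X ∧
        Λ.src x.1 = Λ.src x.2 ∧ Λ.deg x.1 = Λ.deg x.2) ∧
      (∀ a ∈ Submodule.span ℂ
          ((fun x : Λ.Path × Λ.Path => T x.1 x.2) '' (↑Fbar : Set (Λ.Path × Λ.Path))),
        ∀ b ∈ Submodule.span ℂ
          ((fun x : Λ.Path × Λ.Path => T x.1 x.2) '' (↑Fbar : Set (Λ.Path × Λ.Path))),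
        a * b ∈ Submodule.span ℂ
          ((fun x : Λ.Path × Λ.Path => T x.1 x.2) '' (↑Fbar : Set (Λ.Path × Λ.Path)))) ∧
      (∀ a ∈ Submodule.span ℂ
          ((fun x : Λ.Path × Λ.Path => T x.1 x.2) '' (↑Fbar : Set (Λ.Path × Λ.Path))),
        star a ∈ Submodule.span ℂ
          ((fun x : Λ.Path × Λ.Path => T x.1 x.2) '' (↑Fbar : Set (Λ.Path × Λ.Path)))) ∧
      ∃ S : NonUnitalStarSubalgebra ℂ A, FiniteDimensional ℂ S ∧
        ∀ x ∈ F, T x.1 x.2 ∈ S := by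
  have hbal : ∀ x ∈ (F : Set (Λ.Path × Λ.Path)), Λ.Balanced x := fun x hx => (hF x hx).2.2
  have hFX : ∀ x ∈ (F : Set (Λ.Path × Λ.Path)), Λ.rng x.1 ∈ X ∧ Λ.rng x.2 ∈ X :=
    fun x hx => ⟨(hF x hx).1, (hF x hx).2.1⟩
  have hfin := PairClosure.finite hFA F.finite_toSet hbal
  set Fbar := hfin.toFinset
  have hmem (p) : p ∈ Fbar ↔ Λ.PairClosure F p := hfin.mem_toFinset
  have hFsub : F ⊆ Fbar := fun x hx => (hmem x).2 (.base hx)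
  have hwf : ∀ x ∈ Fbar, Λ.rng x.1 ∈ X ∧ Λ.rng x.2 ∈ X ∧
      Λ.src x.1 = Λ.src x.2 ∧ Λ.deg x.1 = Λ.deg x.2 := fun x hx =>
    have hx := (hmem x).1 hx
    ⟨(hx.rng_mem hbal hFX).1, (hx.rng_mem hbal hFX).2, hx.balanced hbal⟩
  have hPX : ∀ p ∈ (Fbar : Set (Λ.Path × Λ.Path)),
      Λ.rng p.1 ∈ X ∧ Λ.rng p.2 ∈ X ∧ Λ.src p.1 = Λ.src p.2 :=
    fun p hp => ⟨(hwf p hp).1, (hwf p hp).2.1, (hwf p hp).2.2.1⟩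
  set s := (fun x : Λ.Path × Λ.Path => T x.1 x.2) '' (Fbar : Set (Λ.Path × Λ.Path))
  have hmul {a b : A} (ha : a ∈ Submodule.span ℂ s) (hb : b ∈ Submodule.span ℂ s) :
      a * b ∈ Submodule.span ℂ s :=
    hT.mul_mem_span hPX
      (fun p hp q hq x hx => (hmem _).2 (.child ((hmem p).1 hp) ((hmem q).1 hq) hx)) ha hb
  have hstar {a : A} (ha : a ∈ Submodule.span ℂ s) : star a ∈ Submodule.span ℂ s :=
    hT.star_mem_span hPX (fun p hp => (hmem _).2 ((hmem p).1 hp).swap) ha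
  obtain ⟨S, hS, hsS⟩ := exists_finiteDimensional_nonUnitalStarSubalgebra
    (Fbar.finite_toSet.image _) (fun _ ha _ hb => hmul ha hb) (fun _ => hstar)
  exact ⟨Fbar, hFsub, hwf, fun _ ha _ hb => hmul ha hb, fun _ => hstar, S, hS,
    fun x hx => hsS ⟨x, hFsub hx, rfl⟩⟩

/-- For any finite set `F` of spanning elements `T_{α,β}` with
`d(α) = d(β)` of the core, there is a finite superset `F̄` of index pairs
whose spanned subspace is closed under multiplication and adjoints; hence
the C*-algebra generated by `F` is contained in a finite-dimensional
star-subalgebra, so it is finite dimensional. -/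
theorem KGraph.core_finitely_generated_finite_dimensional {k : ℕ}
    (Λ : KGraph k) (hFA : Λ.FinitelyAligned)
    {A : Type} [NormedRing A] [StarRing A] [CStarRing A]
    [NormedAlgebra ℂ A] [CompleteSpace A] [StarModule ℂ A]
    (X : Set Λ.Path) (T : Λ.Path → Λ.Path → A) (hT : Λ.CKFamilyX X T)
    (F : Finset (Λ.Path × Λ.Path))
    (hF : ∀ x ∈ F, Λ.rng x.1 ∈ X ∧ Λ.rng x.2 ∈ X ∧
      Λ.src x.1 = Λ.src x.2 ∧ Λ.deg x.1 = Λ.deg x.2) :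
    ∃ Fbar : Finset (Λ.Path × Λ.Path), F ⊆ Fbar ∧
      (∀ x ∈ Fbar, Λ.rng x.1 ∈ X ∧ Λ.rng x.2 ∈ X ∧
        Λ.src x.1 = Λ.src x.2 ∧ Λ.deg x.1 = Λ.deg x.2) ∧
      (∀ a ∈ Submodule.span ℂ
          ((fun x : Λ.Path × Λ.Path => T x.1 x.2) '' (↑Fbar : Set (Λ.Path × Λ.Path))),
        ∀ b ∈ Submodule.span ℂ
          ((fun x : Λ.Path × Λ.Path => T x.1 x.2) '' (↑Fbar : Set (Λ.Path × Λ.Path))),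
        a * b ∈ Submodule.span ℂ
          ((fun x : Λ.Path × Λ.Path => T x.1 x.2) '' (↑Fbar : Set (Λ.Path × Λ.Path)))) ∧
      (∀ a ∈ Submodule.span ℂ
          ((fun x : Λ.Path × Λ.Path => T x.1 x.2) '' (↑Fbar : Set (Λ.Path × Λ.Path))),
        star a ∈ Submodule.span ℂ
          ((fun x : Λ.Path × Λ.Path => T x.1 x.2) '' (↑Fbar : Set (Λ.Path × Λ.Path)))) ∧
      ∃ S : NonUnitalStarSubalgebra ℂ A, FiniteDimensional ℂ S ∧
        ∀ x ∈ F, T x.1 x.2 ∈ S :=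
  KGraph.core_finitely_generated_finite_dimensional_general Λ hFA X T hT F hF
end

section
/- For a finitely aligned k-graph Λ and nonempty X ⊆ Λ^0, the fixed-point algebra C*(Λ,X)^γ of the gauge action is an AF algebra. -/
open scoped BigOperators

/-! ## Section 1: basic path combinatorics -/

namespace KGraph

variable {k : ℕ} (Λ : KGraph k)

/-- Total degree. -/
def tot (m : Fin k → ℕ) : ℕ := ∑ i, m i

lemma tot_add (m n : Fin k → ℕ) : tot (m + n) = tot m + tot n := by
  simp [tot, Finset.sum_add_distrib]

lemma tot_le_tot {m n : Fin k → ℕ} (h : m ≤ n) : tot m ≤ tot n :=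
  Finset.sum_le_sum fun i _ => h i

lemma eq_of_le_of_tot_le {m n : Fin k → ℕ} (h : m ≤ n) (h2 : tot n ≤ tot m) : m = n := by
  by_contra hne
  have : ∃ i, m i < n i := by
    by_contra hc
    push_neg at hc
    exact hne (funext fun i => le_antisymm (h i) (hc i))
  obtain ⟨i, hi⟩ := this
  have : tot m < tot n := by
    refine Finset.sum_lt_sum (fun j _ => h j) ⟨i, Finset.mem_univ i, hi⟩
  omega

lemma tot_lt_of_le_of_ne {m n : Fin k → ℕ} (h : m ≤ n) (h2 : m ≠ n) : tot m < tot n := by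
  rcases lt_or_ge (tot m) (tot n) with h3 | h3
  · exact h3
  · exact absurd (eq_of_le_of_tot_le h h3) h2

variable {Λ}

/-- Degree-zero paths are vertices. -/
lemma eq_src_of_deg_zero {p : Λ.Path} (h : Λ.deg p = 0) :
    Λ.src p = p ∧ Λ.rng p = p := by
  have hfac := Λ.factor p 0 0 (by simpa using h)
  have h1 : (Λ.deg (Λ.rng p) = 0 ∧ Λ.deg p = 0 ∧ Λ.src (Λ.rng p) = Λ.rng p ∧
      p = Λ.comp (Λ.rng p) p) := by
    refine ⟨Λ.deg_rng p, h, Λ.src_rng p, (Λ.id_comp p).symm⟩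
  have h2 : (Λ.deg p = 0 ∧ Λ.deg (Λ.src p) = 0 ∧ Λ.src p = Λ.rng (Λ.src p) ∧
      p = Λ.comp p (Λ.src p)) := by
    refine ⟨h, Λ.deg_src p, (Λ.rng_src p).symm, (Λ.comp_id p).symm⟩
  have := hfac.unique (y₁ := (Λ.rng p, p)) (y₂ := (p, Λ.src p)) h1 h2
  have hr : Λ.rng p = p := congrArg Prod.fst this
  have hs : p = Λ.src p := congrArg Prod.snd this
  exact ⟨hs.symm, hr⟩

lemma vertex_eq_rng {p : Λ.Path} (h : Λ.deg p = 0) : p = Λ.rng p :=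
  (eq_src_of_deg_zero h).2.symm

/-- Left cancellation for composition. -/
lemma comp_left_cancel {x w w' : Λ.Path} (h1 : Λ.src x = Λ.rng w)
    (h2 : Λ.src x = Λ.rng w') (h : Λ.comp x w = Λ.comp x w') : w = w' := by
  have hd : Λ.deg w = Λ.deg w' := by
    have e1 := Λ.deg_comp x w h1
    have e2 := Λ.deg_comp x w' h2
    rw [h, e2] at e1
    exact (add_left_cancel e1.symm)
  have hfac := Λ.factor (Λ.comp x w) (Λ.deg x) (Λ.deg w) (Λ.deg_comp x w h1)
  have hu := hfac.unique (y₁ := (x, w)) (y₂ := (x, w'))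
    ⟨rfl, rfl, h1, rfl⟩ ⟨rfl, hd.symm, h2, h⟩
  exact congrArg Prod.snd hu

/-- Prefix relation: `x` is an initial segment of `z`. -/
def Pre (Λ : KGraph k) (x z : Λ.Path) : Prop :=
  ∃ w, Λ.src x = Λ.rng w ∧ z = Λ.comp x w

lemma Pre.refl (z : Λ.Path) : Λ.Pre z z :=
  ⟨Λ.src z, (Λ.rng_src z).symm, (Λ.comp_id z).symm⟩

open Classical in
/-- The quotient `z ⊘ x` (junk if `x` is not a prefix of `z`). -/
noncomputable def quot (Λ : KGraph k) (x z : Λ.Path) : Λ.Path :=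
  if h : ∃ w, Λ.src x = Λ.rng w ∧ z = Λ.comp x w then h.choose else z

lemma quot_spec {x z : Λ.Path} (h : Λ.Pre x z) :
    Λ.src x = Λ.rng (Λ.quot x z) ∧ z = Λ.comp x (Λ.quot x z) := by
  have h' : ∃ w, Λ.src x = Λ.rng w ∧ z = Λ.comp x w := h
  unfold quot
  rw [dif_pos h']
  exact h'.choose_spec

lemma quot_eq {x z w : Λ.Path} (h1 : Λ.src x = Λ.rng w) (h2 : z = Λ.comp x w) :
    Λ.quot x z = w := by
  have h : Λ.Pre x z := ⟨w, h1, h2⟩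
  obtain ⟨hs, hc⟩ := quot_spec h
  exact comp_left_cancel hs h1 (hc.symm.trans h2)

lemma deg_quot {x z : Λ.Path} (h : Λ.Pre x z) :
    Λ.deg z = Λ.deg x + Λ.deg (Λ.quot x z) := by
  obtain ⟨hs, hc⟩ := quot_spec h
  conv_lhs => rw [hc]
  exact Λ.deg_comp _ _ hs

lemma Pre.deg_le {x z : Λ.Path} (h : Λ.Pre x z) : Λ.deg x ≤ Λ.deg z := by
  obtain ⟨w, h1, h2⟩ := h
  rw [h2, Λ.deg_comp x w h1]
  intro i; simp

lemma Pre.rng_eq {x z : Λ.Path} (h : Λ.Pre x z) : Λ.rng z = Λ.rng x := by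
  obtain ⟨w, h1, h2⟩ := h
  rw [h2]; exact Λ.rng_comp x w h1

lemma Pre.eq_of_deg_eq {x z : Λ.Path} (h : Λ.Pre x z) (hd : Λ.deg x = Λ.deg z) : x = z := by
  obtain ⟨w, h1, h2⟩ := h
  have hw : Λ.deg w = 0 := by
    have := Λ.deg_comp x w h1
    rw [← h2, ← hd] at this
    have : Λ.deg x + Λ.deg w = Λ.deg x + 0 := by simpa using this.symm
    exact add_left_cancel this
  have hv := eq_src_of_deg_zero hw
  have : w = Λ.src x := by rw [← hv.2, ← h1]
  rw [h2, this, Λ.comp_id]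

lemma Pre.trans {x y z : Λ.Path} (h1 : Λ.Pre x y) (h2 : Λ.Pre y z) : Λ.Pre x z := by
  obtain ⟨w, hw1, hw2⟩ := h1
  obtain ⟨u, hu1, hu2⟩ := h2
  have hwu : Λ.src w = Λ.rng u := by
    rw [← hu1, hw2, Λ.src_comp x w hw1]
  refine ⟨Λ.comp w u, ?_, ?_⟩
  · rw [hw1, Λ.rng_comp w u hwu]
  · rw [hu2, hw2, Λ.comp_assoc x w u hw1 hwu]

/-- Prefix extraction at a given degree. -/
lemma exists_prefix {z : Λ.Path} {m : Fin k → ℕ} (h : m ≤ Λ.deg z) :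
    ∃ x, Λ.Pre x z ∧ Λ.deg x = m := by
  have hd : Λ.deg z = m + (Λ.deg z - m) := by
    funext i
    have hi : m i ≤ Λ.deg z i := h i
    simp only [Pi.add_apply, Pi.sub_apply]
    omega
  obtain ⟨⟨x, w⟩, ⟨hx, hw, hsr, hc⟩, _⟩ := Λ.factor z m (Λ.deg z - m) hd
  exact ⟨x, ⟨w, hsr, hc⟩, hx⟩

/-- Uniqueness of prefixes of a given degree. -/
lemma prefix_unique {x y z : Λ.Path} (h1 : Λ.Pre x z) (h2 : Λ.Pre y z)
    (hd : Λ.deg x = Λ.deg y) : x = y := by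
  obtain ⟨w, hw1, hw2⟩ := h1
  obtain ⟨u, hu1, hu2⟩ := h2
  have hfac := Λ.factor z (Λ.deg x) (Λ.deg w) (by rw [hw2]; exact Λ.deg_comp x w hw1)
  have hdw : Λ.deg u = Λ.deg w := by
    have e1 : Λ.deg z = Λ.deg x + Λ.deg w := by rw [hw2]; exact Λ.deg_comp x w hw1
    have e2 : Λ.deg z = Λ.deg y + Λ.deg u := by rw [hu2]; exact Λ.deg_comp y u hu1
    rw [e1, hd] at e2
    exact (add_left_cancel e2).symm
  have hu := hfac.unique (y₁ := (x, w)) (y₂ := (y, u))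
    ⟨rfl, rfl, hw1, hw2⟩ ⟨hd.symm, hdw, hu1, hu2⟩
  exact congrArg Prod.fst hu

/-- Nesting of prefixes. -/
lemma pre_of_pre_of_deg_le {x y z : Λ.Path} (h1 : Λ.Pre x z) (h2 : Λ.Pre y z)
    (hd : Λ.deg x ≤ Λ.deg y) : Λ.Pre x y := by
  obtain ⟨x', hx', hdx'⟩ := exists_prefix (z := y) hd
  have : x' = x := prefix_unique (hx'.trans h2) h1 hdx'
  rwa [← this]

/-- Minimal common extensions (as paths). -/
def MCE (Λ : KGraph k) (x y : Λ.Path) : Set Λ.Path :=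
  {z | Λ.Pre x z ∧ Λ.Pre y z ∧ Λ.deg z = Λ.deg x ⊔ Λ.deg y}

lemma mce_subset_image (x y : Λ.Path) :
    Λ.MCE x y ⊆ (fun ab : Λ.Path × Λ.Path => Λ.comp x ab.1) '' (Λ.minExt x y) := by
  rintro z ⟨hx, hy, hd⟩
  refine ⟨(Λ.quot x z, Λ.quot y z), ⟨(quot_spec hx).1, (quot_spec hy).1, ?_, ?_⟩, ?_⟩
  · rw [← (quot_spec hx).2, ← (quot_spec hy).2]
  · rw [← deg_quot hx, hd]
  · exact (quot_spec hx).2.symm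

lemma mce_finite (hFA : Λ.FinitelyAligned) (x y : Λ.Path) : (Λ.MCE x y).Finite :=
  Set.Finite.subset ((hFA x y).image _) (mce_subset_image x y)

lemma mce_mem_minExt {x y z : Λ.Path} (h : z ∈ Λ.MCE x y) :
    (Λ.quot x z, Λ.quot y z) ∈ Λ.minExt x y := by
  obtain ⟨hx, hy, hd⟩ := h
  exact ⟨(quot_spec hx).1, (quot_spec hy).1,
    by rw [← (quot_spec hx).2, ← (quot_spec hy).2], by rw [← deg_quot hx, hd]⟩

lemma minExt_mem_mce {x y : Λ.Path} {ab : Λ.Path × Λ.Path} (h : ab ∈ Λ.minExt x y) :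
    Λ.comp x ab.1 ∈ Λ.MCE x y := by
  obtain ⟨h1, h2, h3, h4⟩ := h
  refine ⟨⟨ab.1, h1, rfl⟩, ⟨ab.2, h2, h3⟩, ?_⟩
  rw [Λ.deg_comp _ _ h1, h4]

lemma mce_self (z : Λ.Path) : Λ.MCE z z = {z} := by
  ext w
  constructor
  · rintro ⟨h1, _, hd⟩
    exact (h1.eq_of_deg_eq (by rw [hd, sup_idem])).symm
  · rintro rfl
    exact ⟨Pre.refl w, Pre.refl w, (sup_idem _).symm⟩

lemma mce_of_pre {x z : Λ.Path} (h : Λ.Pre x z) : Λ.MCE x z = {z} := by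
  ext w
  constructor
  · rintro ⟨_, h2, hd⟩
    exact (h2.eq_of_deg_eq (by rw [hd, sup_eq_right.mpr h.deg_le])).symm
  · rintro rfl
    exact ⟨h, Pre.refl w, by rw [sup_eq_right.mpr h.deg_le]⟩

/-- `minExt q q` is a singleton. -/
lemma minExt_self (q : Λ.Path) : Λ.minExt q q = {(Λ.src q, Λ.src q)} := by
  ext ⟨a, b⟩
  constructor
  · rintro ⟨h1, h2, h3, h4⟩
    dsimp only at h1 h2 h3 h4
    have hda : Λ.deg a = 0 := by
      have : Λ.deg q + Λ.deg a = Λ.deg q + 0 := by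
        simpa [sup_idem] using h4
      exact add_left_cancel this
    have hdb : Λ.deg b = 0 := by
      have e1 : Λ.deg (Λ.comp q a) = Λ.deg q + Λ.deg a := Λ.deg_comp q a h1
      have e2 : Λ.deg (Λ.comp q b) = Λ.deg q + Λ.deg b := Λ.deg_comp q b h2
      rw [h3, e2] at e1
      have h5 := add_left_cancel e1
      rw [h5]; exact hda
    have ha : a = Λ.src q := by rw [vertex_eq_rng hda, ← h1]
    have hb : b = Λ.src q := by rw [vertex_eq_rng hdb, ← h2]
    simp [ha, hb]
  · rintro h
    simp only [Set.mem_singleton_iff, Prod.mk.injEq] at h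
    obtain ⟨ha, hb⟩ := h
    subst ha; subst hb
    exact ⟨(Λ.rng_src q).symm, (Λ.rng_src q).symm, rfl, by simp [Λ.deg_src, sup_idem]⟩

/-- `minExt q z` for `q` a prefix of `z` is a singleton. -/
lemma minExt_of_pre {q z : Λ.Path} (h : Λ.Pre q z) :
    Λ.minExt q z = {(Λ.quot q z, Λ.src z)} := by
  have hsup : Λ.deg q ⊔ Λ.deg z = Λ.deg z := sup_eq_right.mpr h.deg_le
  ext ⟨a, b⟩
  constructor
  · rintro ⟨h1, h2, h3, h4⟩
    dsimp only at h1 h2 h3 h4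
    rw [hsup] at h4
    have hdb : Λ.deg b = 0 := by
      have e2 : Λ.deg (Λ.comp z b) = Λ.deg z + Λ.deg b := Λ.deg_comp z b h2
      have e1 : Λ.deg (Λ.comp q a) = Λ.deg q + Λ.deg a := Λ.deg_comp q a h1
      rw [h3, e2, h4] at e1
      have : Λ.deg z + 0 = Λ.deg z + Λ.deg b := by simpa using e1
      exact (add_left_cancel this).symm
    have hb : b = Λ.src z := by rw [vertex_eq_rng hdb, ← h2]
    have hzb : Λ.comp z b = z := by rw [hb, Λ.comp_id]
    have ha : a = Λ.quot q z := (quot_eq h1 (hzb.symm.trans h3.symm)).symm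
    simp [ha, hb]
  · rintro hmem
    simp only [Set.mem_singleton_iff, Prod.mk.injEq] at hmem
    obtain ⟨ha, hb⟩ := hmem
    subst ha; subst hb
    refine ⟨(quot_spec h).1, (Λ.rng_src z).symm, ?_, ?_⟩
    · rw [Λ.comp_id, ← (quot_spec h).2]
    · rw [← deg_quot h, hsup]

/-- `minExt z q` for `q` a prefix of `z` is a singleton. -/
lemma minExt_of_pre' {q z : Λ.Path} (h : Λ.Pre q z) :
    Λ.minExt z q = {(Λ.src z, Λ.quot q z)} := by
  have hsup : Λ.deg z ⊔ Λ.deg q = Λ.deg z := sup_eq_left.mpr h.deg_le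
  ext ⟨a, b⟩
  constructor
  · rintro ⟨h1, h2, h3, h4⟩
    dsimp only at h1 h2 h3 h4
    rw [hsup] at h4
    have hda : Λ.deg a = 0 := by
      have : Λ.deg z + Λ.deg a = Λ.deg z + 0 := by simpa using h4
      exact add_left_cancel this
    have ha : a = Λ.src z := by rw [vertex_eq_rng hda, ← h1]
    have hza : Λ.comp z a = z := by rw [ha, Λ.comp_id]
    have hb : b = Λ.quot q z := (quot_eq h2 (hza.symm.trans h3)).symm
    simp [ha, hb]
  · rintro hmem
    simp only [Set.mem_singleton_iff, Prod.mk.injEq] at hmem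
    obtain ⟨ha, hb⟩ := hmem
    subst ha; subst hb
    refine ⟨(Λ.rng_src z).symm, (quot_spec h).1, ?_, ?_⟩
    · rw [Λ.comp_id, ← (quot_spec h).2]
    · rw [hsup, Λ.deg_src]; simp

/-- Swap symmetry of `minExt`. -/
lemma minExt_swap (x y : Λ.Path) :
    Λ.minExt y x = (fun ab : Λ.Path × Λ.Path => (ab.2, ab.1)) '' (Λ.minExt x y) := by
  ext ⟨a, b⟩
  constructor
  · rintro ⟨h1, h2, h3, h4⟩
    dsimp only at h1 h2 h3 h4
    refine ⟨(b, a), ⟨h2, h1, h3.symm, ?_⟩, rfl⟩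
    · have e1 : Λ.deg (Λ.comp y a) = Λ.deg y + Λ.deg a := Λ.deg_comp y a h1
      have e2 : Λ.deg (Λ.comp x b) = Λ.deg x + Λ.deg b := Λ.deg_comp x b h2
      rw [h3, e2] at e1
      rw [e1, h4]; exact sup_comm _ _
  · rintro ⟨⟨c, d⟩, ⟨h1, h2, h3, h4⟩, hab⟩
    dsimp only at h1 h2 h3 h4
    simp only [Prod.mk.injEq] at hab
    obtain ⟨hd, hc⟩ := hab
    subst hd; subst hc
    refine ⟨h2, h1, h3.symm, ?_⟩
    have e1 := Λ.deg_comp _ _ h1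
    have e2 := Λ.deg_comp _ _ h2
    rw [h3, e2] at e1
    rw [e1, h4]; exact sup_comm _ _

end KGraph
/-! ## Section 2: the swap orbit and its finiteness -/

set_option linter.unusedSectionVars false

namespace KGraph

variable {k : ℕ} {Λ : KGraph k}

/-- Auxiliary quotient lemmas. -/
lemma quot_comp {ν g t : Λ.Path} (hν : Λ.Pre ν g) (ht : Λ.src g = Λ.rng t) :
    Λ.quot ν (Λ.comp g t) = Λ.comp (Λ.quot ν g) t := by
  obtain ⟨hs, hc⟩ := quot_spec hν
  have h1 : Λ.src (Λ.quot ν g) = Λ.rng t := by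
    rw [← ht]
    conv_rhs => rw [hc]
    rw [Λ.src_comp _ _ hs]
  refine quot_eq ?_ ?_
  · rw [hs, Λ.rng_comp _ _ h1]
  · conv_lhs => rw [hc]
    rw [Λ.comp_assoc _ _ _ hs h1]

lemma quot_nested {g R z : Λ.Path} (h1 : Λ.Pre g R) (h2 : Λ.Pre R z) :
    Λ.quot g z = Λ.comp (Λ.quot g R) (Λ.quot R z) := by
  obtain ⟨hs2, hc2⟩ := quot_spec h2
  conv_lhs => rw [hc2]
  exact quot_comp h1 hs2

lemma comp_vertex {u t : Λ.Path} (ht : Λ.deg t = 0) (hs : Λ.src u = Λ.rng t) :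
    Λ.comp u t = u := by
  have : t = Λ.src u := by rw [vertex_eq_rng ht, ← hs]
  rw [this, Λ.comp_id]

/-- The swap step along a pool of matched pairs. -/
def SStep (P : Set (Λ.Path × Λ.Path)) (z z' : Λ.Path) : Prop :=
  ∃ p ∈ P, Λ.Pre p.2 z ∧ z' = Λ.comp p.1 (Λ.quot p.2 z)

section Swap

variable {P : Set (Λ.Path × Λ.Path)}
variable (hPd : ∀ p ∈ P, Λ.deg p.1 = Λ.deg p.2)
variable (hPs : ∀ p ∈ P, Λ.src p.1 = Λ.src p.2)
variable (hPsym : ∀ p ∈ P, (p.2, p.1) ∈ P)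

include hPs in
lemma SStep.comp_ok {z z' : Λ.Path} (h : SStep P z z') :
    ∃ p ∈ P, Λ.Pre p.2 z ∧ z' = Λ.comp p.1 (Λ.quot p.2 z) ∧
      Λ.src p.1 = Λ.rng (Λ.quot p.2 z) := by
  obtain ⟨p, hp, hpre, hz'⟩ := h
  exact ⟨p, hp, hpre, hz', by rw [hPs p hp]; exact (quot_spec hpre).1⟩

include hPd hPs in
lemma SStep.deg_eq {z z' : Λ.Path} (h : SStep P z z') : Λ.deg z' = Λ.deg z := by
  obtain ⟨p, hp, hpre, hz', hcomp⟩ := h.comp_ok hPs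
  rw [hz', Λ.deg_comp _ _ hcomp, hPd p hp, ← deg_quot hpre]

include hPd hPs hPsym in
lemma SStep.symm {z z' : Λ.Path} (h : SStep P z z') : SStep P z' z := by
  obtain ⟨p, hp, hpre, hz', hcomp⟩ := h.comp_ok hPs
  have hpre' : Λ.Pre p.1 z' := ⟨Λ.quot p.2 z, hcomp, hz'⟩
  refine ⟨(p.2, p.1), hPsym p hp, hpre', ?_⟩
  have : Λ.quot p.1 z' = Λ.quot p.2 z := quot_eq hcomp hz'
  rw [this]
  exact (quot_spec hpre).2

/-- The orbit of a path under swap steps. -/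
def ReachSet (P : Set (Λ.Path × Λ.Path)) (z0 : Λ.Path) : Set Λ.Path :=
  {z | Relation.ReflTransGen (SStep P) z0 z}

lemma self_mem_reach (z0 : Λ.Path) : z0 ∈ ReachSet P z0 := Relation.ReflTransGen.refl

lemma reach_closed {z0 z z' : Λ.Path} (h : z ∈ ReachSet P z0) (h2 : SStep P z z') :
    z' ∈ ReachSet P z0 := Relation.ReflTransGen.tail h h2

include hPd hPs in
lemma reach_deg {z0 z : Λ.Path} (h : z ∈ ReachSet P z0) : Λ.deg z = Λ.deg z0 := by
  induction h with
  | refl => rfl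
  | tail _ hstep ih => rw [hstep.deg_eq hPd hPs, ih]

include hPd hPs hPsym in
lemma reach_symm {z0 z : Λ.Path} (h : z ∈ ReachSet P z0) : z0 ∈ ReachSet P z := by
  induction h with
  | refl => exact Relation.ReflTransGen.refl
  | tail _ hstep ih =>
      exact Relation.ReflTransGen.head (hstep.symm hPd hPs hPsym) ih

/-- Saturation of a set under swap reachability. -/
def SwapSat (P : Set (Λ.Path × Λ.Path)) (S : Set Λ.Path) : Set Λ.Path :=
  ⋃ z ∈ S, ReachSet P z

lemma subset_swapSat {S : Set Λ.Path} : S ⊆ SwapSat P S := fun z hz =>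
  Set.mem_biUnion hz (self_mem_reach z)

lemma swapSat_closed {S : Set Λ.Path} {z z' : Λ.Path} (h : z ∈ SwapSat P S)
    (h2 : SStep P z z') : z' ∈ SwapSat P S := by
  obtain ⟨w, hw, hz⟩ := Set.mem_iUnion₂.mp h
  exact Set.mem_biUnion hw (reach_closed hz h2)

/-- The level sets of "raised" pinned prefixes. -/
def Dlev (P : Set (Λ.Path × Λ.Path)) (d : Fin k → ℕ) : ℕ → Set Λ.Path
  | 0 => SwapSat P {μ | (∃ p ∈ P, p.1 = μ) ∧ Λ.deg μ ≤ d ∧ Λ.deg μ ≠ d}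
  | j+1 => Dlev P d j ∪ SwapSat P {z | (∃ g ∈ Dlev P d j, ∃ p ∈ P, ∃ R ∈ Λ.MCE g p.2,
      z = Λ.comp p.1 (Λ.quot p.2 R)) ∧ Λ.deg z ≤ d ∧ Λ.deg z ≠ d}

lemma dlev_mono {d : Fin k → ℕ} : Monotone (Dlev P d) := by
  refine monotone_nat_of_le_succ fun j => ?_
  intro z hz
  exact Set.mem_union_left _ hz

lemma dlev_closed {d : Fin k → ℕ} {j : ℕ} {z z' : Λ.Path} (h : z ∈ Dlev P d j)
    (h2 : SStep P z z') : z' ∈ Dlev P d j := by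
  induction j with
  | zero => exact swapSat_closed h h2
  | succ j ih =>
      rcases h with h | h
      · exact Set.mem_union_left _ (ih h)
      · exact Set.mem_union_right _ (swapSat_closed h h2)

include hPd hPs in
lemma dlev_deg {d : Fin k → ℕ} {j : ℕ} {z : Λ.Path} (h : z ∈ Dlev P d j) :
    Λ.deg z ≤ d ∧ Λ.deg z ≠ d := by
  induction j with
  | zero =>
      obtain ⟨w, hw, hz⟩ := Set.mem_iUnion₂.mp h
      rw [reach_deg hPd hPs hz]
      exact hw.2
  | succ j ih =>
      rcases h with h | h
      · exact ih h
      · obtain ⟨w, hw, hz⟩ := Set.mem_iUnion₂.mp h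
        rw [reach_deg hPd hPs hz]
        exact hw.2

/-- The full pinned-prefix pool. -/
def DD (P : Set (Λ.Path × Λ.Path)) (d : Fin k → ℕ) : Set Λ.Path := Dlev P d (tot d)

/-- Pieces attached to words: quotients of pinned raises. -/
def QUOT (P : Set (Λ.Path × Λ.Path)) (d : Fin k → ℕ) : Set Λ.Path :=
  {q | ∃ g ∈ DD P d, ∃ p ∈ P, ∃ R ∈ Λ.MCE g p.2, q = Λ.quot g R}

/-- Bounded words over pool heads and pieces. -/
def Words (P : Set (Λ.Path × Λ.Path)) (d : Fin k → ℕ) : ℕ → Set Λ.Path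
  | 0 => {μ | ∃ p ∈ P, p.1 = μ}
  | j+1 => Words P d j ∪ {w | ∃ u ∈ Words P d j, ∃ q ∈ QUOT P d, w = Λ.comp u q}

lemma words_mono {d : Fin k → ℕ} : Monotone (Words P d) := by
  refine monotone_nat_of_le_succ fun j => ?_
  intro z hz
  exact Set.mem_union_left _ hz

end Swap

section Fin

variable {P : Set (Λ.Path × Λ.Path)}
variable (hFA : Λ.FinitelyAligned)
variable (hPfin : P.Finite)
variable (hPd : ∀ p ∈ P, Λ.deg p.1 = Λ.deg p.2)
variable (hPs : ∀ p ∈ P, Λ.src p.1 = Λ.src p.2)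
variable (hPsym : ∀ p ∈ P, (p.2, p.1) ∈ P)
variable {d : Fin k → ℕ}
variable (hIH : ∀ z : Λ.Path, tot (Λ.deg z) < tot d → (ReachSet P z).Finite)

include hIH in
lemma swapSat_finite {S : Set Λ.Path} (hS : S.Finite)
    (hdeg : ∀ z ∈ S, Λ.deg z ≤ d ∧ Λ.deg z ≠ d) : (SwapSat P S).Finite := by
  refine Set.Finite.biUnion hS fun z hz => ?_
  exact hIH z (tot_lt_of_le_of_ne (hdeg z hz).1
    (fun h => (hdeg z hz).2 (by rw [h])))

include hPfin in
lemma fsts_finite : {μ : Λ.Path | ∃ p ∈ P, p.1 = μ}.Finite := by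
  have : {μ : Λ.Path | ∃ p ∈ P, p.1 = μ} = Prod.fst '' P := by
    ext μ
    simp [Set.mem_image, eq_comm]
  rw [this]
  exact hPfin.image _

include hFA hPfin hIH in
lemma dlev_finite (j : ℕ) : (Dlev P d j).Finite := by
  induction j with
  | zero =>
      refine swapSat_finite hIH ?_ (fun z hz => hz.2)
      exact (fsts_finite hPfin).subset (fun μ hμ => hμ.1)
  | succ j ih =>
      refine Set.Finite.union ih ?_
      refine swapSat_finite hIH ?_ (fun z hz => hz.2)
      have hsub : {z | (∃ g ∈ Dlev P d j, ∃ p ∈ P, ∃ R ∈ Λ.MCE g p.2,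
          z = Λ.comp p.1 (Λ.quot p.2 R)) ∧ Λ.deg z ≤ d ∧ Λ.deg z ≠ d} ⊆
          ⋃ g ∈ Dlev P d j, ⋃ p ∈ P, (fun R => Λ.comp p.1 (Λ.quot p.2 R)) '' (Λ.MCE g p.2) := by
        rintro z ⟨⟨g, hg, p, hp, R, hR, hz⟩, -⟩
        refine Set.mem_biUnion hg (Set.mem_biUnion hp ⟨R, hR, hz.symm⟩)
      refine Set.Finite.subset ?_ hsub
      refine Set.Finite.biUnion ih fun g _ => ?_
      refine Set.Finite.biUnion hPfin fun p _ => ?_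
      exact (mce_finite hFA g p.2).image _

include hFA hPfin hIH in
lemma dd_finite : (DD P d).Finite := dlev_finite hFA hPfin hIH (tot d)

include hFA hPfin hIH in
lemma quot_finite' : (QUOT P d).Finite := by
  have hsub : QUOT P d ⊆
      ⋃ g ∈ DD P d, ⋃ p ∈ P, (fun R => Λ.quot g R) '' (Λ.MCE g p.2) := by
    rintro q ⟨g, hg, p, hp, R, hR, hq⟩
    exact Set.mem_biUnion hg (Set.mem_biUnion hp ⟨R, hR, hq.symm⟩)
  refine Set.Finite.subset ?_ hsub
  refine Set.Finite.biUnion (dd_finite hFA hPfin hIH) fun g _ => ?_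
  refine Set.Finite.biUnion hPfin fun p _ => ?_
  exact (mce_finite hFA g p.2).image _

include hFA hPfin hIH in
lemma words_finite (j : ℕ) : (Words P d j).Finite := by
  induction j with
  | zero => exact fsts_finite hPfin
  | succ j ih =>
      refine Set.Finite.union ih ?_
      have hsub : {w | ∃ u ∈ Words P d j, ∃ q ∈ QUOT P d, w = Λ.comp u q} ⊆
          ⋃ u ∈ Words P d j, (fun q => Λ.comp u q) '' (QUOT P d) := by
        rintro w ⟨u, hu, q, hq, hw⟩
        exact Set.mem_biUnion hu ⟨q, hq, hw.symm⟩
      refine Set.Finite.subset ?_ hsub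
      refine Set.Finite.biUnion ih fun u _ => ?_
      exact (quot_finite' hFA hPfin hIH).image _

end Fin

section Cert

variable {P : Set (Λ.Path × Λ.Path)}
variable (hPd : ∀ p ∈ P, Λ.deg p.1 = Λ.deg p.2)
variable (hPs : ∀ p ∈ P, Λ.src p.1 = Λ.src p.2)
variable (hPsym : ∀ p ∈ P, (p.2, p.1) ∈ P)
variable {d : Fin k → ℕ}

lemma tot_eq_zero {m : Fin k → ℕ} (h : tot m = 0) : m = 0 := by
  funext i
  exact Finset.sum_eq_zero_iff.mp h i (Finset.mem_univ i)

lemma tot_pos {m : Fin k → ℕ} (h : m ≠ 0) : 1 ≤ tot m := by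
  rcases Nat.eq_zero_or_pos (tot m) with h0 | h1
  · exact absurd (tot_eq_zero h0) h
  · exact h1

lemma quot_src {x z : Λ.Path} (h : Λ.Pre x z) : Λ.src z = Λ.src (Λ.quot x z) := by
  obtain ⟨hs, hc⟩ := quot_spec h
  conv_lhs => rw [hc]
  exact Λ.src_comp _ _ hs

/-- The certificate invariant. -/
def CertInv (P : Set (Λ.Path × Λ.Path)) (d : Fin k → ℕ) (w0 wr : Λ.Path) : Prop :=
  w0 = wr ∨ w0 ∈ Words P d (tot d) ∨
  ∃ g u, g ∈ Dlev P d (tot (Λ.deg g)) ∧ Λ.deg g ≤ d ∧ Λ.deg g ≠ d ∧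
    u ∈ Words P d (tot (Λ.deg u)) ∧ Λ.Pre g wr ∧
    Λ.src u = Λ.rng (Λ.quot g wr) ∧ w0 = Λ.comp u (Λ.quot g wr)

include hPd hPs hPsym in
/-- The key certificate lemma: any element chain-connected to `wr` is pinned. -/
lemma cert {w0 wr : Λ.Path} (h : Relation.ReflTransGen (SStep P) w0 wr)
    (hdeg : Λ.deg w0 = d) : CertInv P d w0 wr := by
  induction h with
  | refl => exact Or.inl rfl
  | @tail wr wnext h' hstep ih =>
    obtain ⟨p, hp, hpre, hznext, hcompat⟩ := hstep.comp_ok hPs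
    have hdwr : Λ.deg wr = d := by
      rw [reach_deg hPd hPs h', hdeg]
    rcases ih with hcase1 | hW | ⟨g, u, hgD, hgle, hgne, huW, hgpre, hucomp, hw0⟩
    · -- the previous chain was trivial: w0 = wr
      subst hcase1
      by_cases hc : Λ.deg p.1 = d
      · -- full-degree pair: w0 = p.2 itself is a pool head
        right; left
        have hd2 : Λ.deg p.2 = d := by rw [← hPd p hp, hc]
        have hdt : Λ.deg (Λ.quot p.2 w0) = 0 := by
          have hq := deg_quot hpre
          rw [hdwr, hd2] at hq
          exact (add_eq_left.mp hq.symm)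
        have hw : w0 = p.2 := by
          conv_lhs => rw [(quot_spec hpre).2]
          exact comp_vertex hdt (quot_spec hpre).1
        rw [hw]
        exact words_mono (Nat.zero_le _) ⟨(p.2, p.1), hPsym p hp, rfl⟩
      · -- start the pinning with g := p.1, u := p.2
        right; right
        have hle1 : Λ.deg p.1 ≤ d := by
          rw [hPd p hp, ← hdwr]
          exact hpre.deg_le
        have hD : p.1 ∈ Dlev P d (tot (Λ.deg p.1)) := by
          refine dlev_mono (Nat.zero_le _) (subset_swapSat ⟨⟨p, hp, rfl⟩, hle1, hc⟩)
        have hqq : Λ.quot p.1 wnext = Λ.quot p.2 w0 := quot_eq hcompat hznext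
        refine ⟨p.1, p.2, hD, hle1, hc, ?_, ⟨Λ.quot p.2 w0, hcompat, hznext⟩, ?_, ?_⟩
        · exact words_mono (Nat.zero_le _) ⟨(p.2, p.1), hPsym p hp, rfl⟩
        · rw [hqq]
          exact (quot_spec hpre).1
        · rw [hqq]
          exact (quot_spec hpre).2
    · exact Or.inr (Or.inl hW)
    · -- main case
      obtain ⟨hgs, hgc⟩ := quot_spec hgpre
      by_cases hcase : Λ.deg p.2 ≤ Λ.deg g
      · -- plateau: replace inside the pinned prefix
        have hν : Λ.Pre p.2 g := pre_of_pre_of_deg_le hpre hgpre hcase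
        have hq : Λ.quot p.2 wr = Λ.comp (Λ.quot p.2 g) (Λ.quot g wr) := by
          conv_lhs => rw [hgc]
          exact quot_comp hν hgs
        have hstepg : SStep P g (Λ.comp p.1 (Λ.quot p.2 g)) := ⟨p, hp, hν, rfl⟩
        set g' := Λ.comp p.1 (Λ.quot p.2 g) with hg'def
        have hg'D : g' ∈ Dlev P d (tot (Λ.deg g)) := dlev_closed hgD hstepg
        have hdg' : Λ.deg g' = Λ.deg g := hstepg.deg_eq hPd hPs
        have hsq : Λ.src p.1 = Λ.rng (Λ.quot p.2 g) := by
          rw [hPs p hp]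
          exact (quot_spec hν).1
        have hsg' : Λ.src g' = Λ.rng (Λ.quot g wr) := by
          rw [hg'def, Λ.src_comp _ _ hsq, ← quot_src hν, ← hgs]
        have hwnext : wnext = Λ.comp g' (Λ.quot g wr) := by
          rw [hznext, hq, hg'def, Λ.comp_assoc _ _ _ hsq (by rw [← quot_src hν, ← hgs])]
        have hqq : Λ.quot g' wnext = Λ.quot g wr := quot_eq hsg' hwnext
        right; right
        refine ⟨g', u, ?_, ?_, ?_, huW, ⟨Λ.quot g wr, hsg', hwnext⟩, ?_, ?_⟩
        · rw [hdg']; exact hg'D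
        · rw [hdg']; exact hgle
        · rw [hdg']; exact hgne
        · rw [hqq]; exact hucomp
        · rw [hqq]; exact hw0
      · -- raise: extend the pinned prefix by a minimal common extension
        have hgled : Λ.deg g ≤ Λ.deg wr := hgpre.deg_le
        have hνled : Λ.deg p.2 ≤ Λ.deg wr := hpre.deg_le
        obtain ⟨R, hRpre, hRdeg⟩ := exists_prefix (z := wr) (sup_le hgled hνled)
        have hgR : Λ.Pre g R := pre_of_pre_of_deg_le hgpre hRpre (by rw [hRdeg]; exact le_sup_left)
        have hνR : Λ.Pre p.2 R := pre_of_pre_of_deg_le hpre hRpre (by rw [hRdeg]; exact le_sup_right)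
        have hRmce : R ∈ Λ.MCE g p.2 := ⟨hgR, hνR, hRdeg⟩
        have hgDD : g ∈ DD P d := dlev_mono (tot_le_tot hgle) hgD
        have hqQ : Λ.quot g R ∈ QUOT P d := ⟨g, hgDD, p, hp, R, hRmce, rfl⟩
        have ht_split : Λ.quot g wr = Λ.comp (Λ.quot g R) (Λ.quot R wr) :=
          quot_nested hgR hRpre
        have hdq0 : Λ.deg (Λ.quot g R) ≠ 0 := by
          intro h0
          have hdgR := deg_quot hgR
          rw [h0, add_zero] at hdgR
          exact hcase (by rw [← hdgR, hRdeg]; exact le_sup_right)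
        have hsqR : Λ.src p.1 = Λ.rng (Λ.quot p.2 R) := by
          rw [hPs p hp]; exact (quot_spec hνR).1
        set g'' := Λ.comp p.1 (Λ.quot p.2 R) with hg''def
        have hdg'' : Λ.deg g'' = Λ.deg R := by
          rw [hg''def, Λ.deg_comp _ _ hsqR, hPd p hp, ← deg_quot hνR]
        have hsrcR : Λ.src R = Λ.rng (Λ.quot R wr) := (quot_spec hRpre).1
        have hsq'' : Λ.src g'' = Λ.rng (Λ.quot R wr) := by
          rw [hg''def, Λ.src_comp _ _ hsqR, ← quot_src hνR, hsrcR]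
        have hqt' : Λ.src (Λ.quot g R) = Λ.rng (Λ.quot R wr) := by
          rw [← quot_src hgR, hsrcR]
        have hwnext : wnext = Λ.comp g'' (Λ.quot R wr) := by
          rw [hznext]
          have : Λ.quot p.2 wr = Λ.comp (Λ.quot p.2 R) (Λ.quot R wr) :=
            quot_nested hνR hRpre
          rw [this, hg''def, Λ.comp_assoc _ _ _ hsqR (by rw [← quot_src hνR, hsrcR])]
        have hsu : Λ.src u = Λ.rng (Λ.quot g R) := by
          rw [hucomp, ht_split, Λ.rng_comp _ _ hqt']
        have hw0' : w0 = Λ.comp (Λ.comp u (Λ.quot g R)) (Λ.quot R wr) := by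
          rw [hw0, ht_split, Λ.comp_assoc _ _ _ hsu hqt']
        have hdu' : Λ.deg (Λ.comp u (Λ.quot g R)) = Λ.deg u + Λ.deg (Λ.quot g R) :=
          Λ.deg_comp _ _ hsu
        have huW' : Λ.comp u (Λ.quot g R) ∈ Words P d (tot (Λ.deg u) + 1) := by
          exact Set.mem_union_right _ ⟨u, huW, Λ.quot g R, hqQ, rfl⟩
        by_cases hR_d : Λ.deg R = d
        · -- the pin is complete: w0 is a bounded word
          right; left
          have hRwr : R = wr := hRpre.eq_of_deg_eq (by rw [hR_d, hdwr])
          have hdt' : Λ.deg (Λ.quot R wr) = 0 := by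
            have hq := deg_quot hRpre
            rw [hdwr, hR_d] at hq
            exact (add_eq_left.mp hq.symm)
          have hw0'' : w0 = Λ.comp u (Λ.quot g R) := by
            rw [hw0']
            exact comp_vertex hdt' (by rw [Λ.src_comp _ _ hsu, hqt'])
          rw [hw0'']
          refine words_mono ?_ huW'
          -- tot (deg u) + 1 ≤ tot d
          have h1 : tot (Λ.deg w0) = tot (Λ.deg u) + tot (Λ.deg (Λ.quot g R)) := by
            rw [hw0'', hdu', tot_add]
          have h2 : 1 ≤ tot (Λ.deg (Λ.quot g R)) := tot_pos hdq0
          rw [hdeg] at h1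
          omega
        · -- branch 3 continues with the longer pin
          right; right
          have hg''le : Λ.deg g'' ≤ d := by
            rw [hdg'', ← hdwr]; exact hRpre.deg_le
          have hg''ne : Λ.deg g'' ≠ d := by rw [hdg'']; exact hR_d
          have hg''D : g'' ∈ Dlev P d (tot (Λ.deg g'')) := by
            have hmem : g'' ∈ Dlev P d (tot (Λ.deg g) + 1) := by
              refine Set.mem_union_right _ (subset_swapSat ?_)
              exact ⟨⟨g, hgD, p, hp, R, hRmce, rfl⟩, hg''le, hg''ne⟩
            refine dlev_mono ?_ hmem
            have : tot (Λ.deg g'') = tot (Λ.deg g) + tot (Λ.deg (Λ.quot g R)) := by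
              rw [hdg'', deg_quot hgR, tot_add]
            have := tot_pos hdq0
            omega
          have huW'' : Λ.comp u (Λ.quot g R) ∈
              Words P d (tot (Λ.deg (Λ.comp u (Λ.quot g R)))) := by
            refine words_mono ?_ huW'
            rw [hdu', tot_add]
            have := tot_pos hdq0
            omega
          have hqq : Λ.quot g'' wnext = Λ.quot R wr := quot_eq hsq'' hwnext
          refine ⟨g'', Λ.comp u (Λ.quot g R), hg''D, hg''le, hg''ne, huW'',
            ⟨Λ.quot R wr, hsq'', hwnext⟩, ?_, ?_⟩
          · rw [hqq]
            rw [Λ.src_comp _ _ hsu, hqt']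
          · rw [hqq]; exact hw0'

end Cert

section Orbit

variable {P : Set (Λ.Path × Λ.Path)}
variable (hFA : Λ.FinitelyAligned)
variable (hPfin : P.Finite)
variable (hPd : ∀ p ∈ P, Λ.deg p.1 = Λ.deg p.2)
variable (hPs : ∀ p ∈ P, Λ.src p.1 = Λ.src p.2)
variable (hPsym : ∀ p ∈ P, (p.2, p.1) ∈ P)

include hFA hPfin hPd hPs hPsym in
/-- Orbit finiteness: the swap orbit of any path is finite. -/
theorem reach_finite (z0 : Λ.Path) : (ReachSet P z0).Finite := by
  have main : ∀ n : ℕ, ∀ z0 : Λ.Path, tot (Λ.deg z0) = n → (ReachSet P z0).Finite := by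
    intro n
    induction n using Nat.strong_induction_on with
    | _ n IH =>
      intro z0 hn
      set d := Λ.deg z0 with hd
      have hIH : ∀ z : Λ.Path, tot (Λ.deg z) < tot d → (ReachSet P z).Finite := by
        intro z hz
        exact IH _ (by rw [← hn]; exact hz) z rfl
      have hsub : ReachSet P z0 ⊆ {z0} ∪ Words P d (tot d) ∪
          ⋃ g ∈ DD P d, (fun u => Λ.comp u (Λ.quot g z0)) '' (Words P d (tot d)) := by
        intro z hz
        have hchain : Relation.ReflTransGen (SStep P) z z0 := reach_symm hPd hPs hPsym hz
        have hdz : Λ.deg z = d := reach_deg hPd hPs hz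
        rcases cert hPd hPs hPsym hchain hdz with h1 | h2 |
          ⟨g, u, hgD, hgle, hgne, huW, hgpre, hucomp, hw0⟩
        · exact Or.inl (Or.inl h1)
        · exact Or.inl (Or.inr h2)
        · right
          have hgDD : g ∈ DD P d := dlev_mono (tot_le_tot hgle) hgD
          refine Set.mem_biUnion hgDD ⟨u, ?_, hw0.symm⟩
          refine words_mono (tot_le_tot ?_) huW
          have hdz' : Λ.deg z = Λ.deg u + Λ.deg (Λ.quot g z0) := by
            rw [hw0]; exact Λ.deg_comp _ _ hucomp
          rw [← hdz, hdz']
          intro i; simp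
      refine Set.Finite.subset ?_ hsub
      refine Set.Finite.union (Set.Finite.union (Set.finite_singleton z0)
        (words_finite hFA hPfin hIH (tot d))) ?_
      refine Set.Finite.biUnion (dd_finite hFA hPfin hIH) fun g _ => ?_
      exact (words_finite hFA hPfin hIH (tot d)).image _
  exact main (tot (Λ.deg z0)) z0 rfl

include hFA hPfin hPd hPs hPsym in
lemma swapSat_finite' {S : Set Λ.Path} (hS : S.Finite) : (SwapSat P S).Finite :=
  Set.Finite.biUnion hS fun z _ => reach_finite hFA hPfin hPd hPs hPsym z

/-- All pairwise minimal common extensions of members of a set. -/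
def MCEs (A : Set Λ.Path) : Set Λ.Path := ⋃ x ∈ A, ⋃ y ∈ A, Λ.MCE x y

include hFA in
lemma mces_finite {A : Set Λ.Path} (hA : A.Finite) : (MCEs A).Finite :=
  Set.Finite.biUnion hA fun x _ => Set.Finite.biUnion hA fun y _ => mce_finite hFA x y

/-- Accumulated strata of the closure. -/
def Acc (P : Set (Λ.Path × Λ.Path)) (S0 : Set Λ.Path) : ℕ → Set Λ.Path
  | 0 => ∅
  | t+1 => Acc P S0 t ∪ SwapSat P
      {z ∈ S0 ∪ MCEs (Acc P S0 t) | tot (Λ.deg z) = t}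

variable {S0 : Set Λ.Path}

lemma acc_mono : Monotone (Acc P S0) := by
  refine monotone_nat_of_le_succ fun t => ?_
  intro z hz
  exact Set.mem_union_left _ hz

lemma acc_closed {t : ℕ} {z z' : Λ.Path} (h : z ∈ Acc P S0 t) (h2 : SStep P z z') :
    z' ∈ Acc P S0 t := by
  induction t with
  | zero => exact absurd h (Set.notMem_empty z)
  | succ t ih =>
      rcases h with h | h
      · exact Set.mem_union_left _ (ih h)
      · exact Set.mem_union_right _ (swapSat_closed h h2)

include hPd hPs in
lemma acc_tot {t : ℕ} {z : Λ.Path} (h : z ∈ Acc P S0 t) : tot (Λ.deg z) < t := by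
  induction t with
  | zero => exact absurd h (Set.notMem_empty z)
  | succ t ih =>
      rcases h with h | h
      · exact Nat.lt_succ_of_lt (ih h)
      · obtain ⟨w, hw, hz⟩ := Set.mem_iUnion₂.mp h
        rw [reach_deg hPd hPs hz]
        rw [hw.2]
        exact Nat.lt_succ_self t

include hPd hPs in
lemma acc_strat {t : ℕ} {z : Λ.Path} (h : z ∈ Acc P S0 t) :
    z ∈ Acc P S0 (tot (Λ.deg z) + 1) := by
  induction t with
  | zero => exact absurd h (Set.notMem_empty z)
  | succ t ih =>
      rcases h with h | h
      · exact ih h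
      · obtain ⟨w, hw, hz⟩ := Set.mem_iUnion₂.mp h
        have ht : tot (Λ.deg z) = t := by rw [reach_deg hPd hPs hz, hw.2]
        rw [ht]
        exact Set.mem_union_right _ (Set.mem_biUnion hw hz)

include hFA hPfin hPd hPs hPsym in
lemma acc_finite (hS0 : S0.Finite) (t : ℕ) : (Acc P S0 t).Finite := by
  induction t with
  | zero => exact Set.finite_empty
  | succ t ih =>
      refine Set.Finite.union ih ?_
      refine swapSat_finite' hFA hPfin hPd hPs hPsym ?_
      exact ((hS0.union (mces_finite hFA ih)).subset (fun z hz => hz.1))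

include hFA hPfin hPd hPs hPsym in
/-- The existence of a finite set closed under MCEs and swaps. -/
theorem exists_closure (hS0 : S0.Finite) :
    ∃ E : Set Λ.Path, E.Finite ∧ S0 ⊆ E ∧
      (∀ x ∈ E, ∀ y ∈ E, Λ.MCE x y ⊆ E) ∧
      (∀ z ∈ E, ∀ z', SStep P z z' → z' ∈ E) := by
  -- a degree bound for S0
  obtain ⟨Nv, hNv⟩ : ∃ Nv : Fin k → ℕ, ∀ z ∈ S0, Λ.deg z ≤ Nv := by
    refine ⟨hS0.toFinset.sup Λ.deg, fun z hz => ?_⟩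
    exact Finset.le_sup (hS0.mem_toFinset.mpr hz)
  set N := tot Nv with hN
  set E := Acc P S0 (N + 1) with hE
  -- all accumulated elements have degree ≤ Nv
  have hdegE : ∀ t, ∀ z ∈ Acc P S0 t, Λ.deg z ≤ Nv := by
    intro t
    induction t with
    | zero => intro z hz; exact absurd hz (Set.notMem_empty z)
    | succ t ih =>
        intro z hz
        rcases hz with hz | hz
        · exact ih z hz
        · obtain ⟨w, hw, hzw⟩ := Set.mem_iUnion₂.mp hz
          rw [reach_deg hPd hPs hzw]
          rcases hw.1 with hw1 | hw1
          · exact hNv w hw1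
          · obtain ⟨x, hx, hrest⟩ := Set.mem_iUnion₂.mp hw1
            obtain ⟨y, hy, hmce⟩ := Set.mem_iUnion₂.mp hrest
            obtain ⟨-, -, hd⟩ := hmce
            rw [hd]
            exact sup_le (ih x hx) (ih y hy)
  refine ⟨E, acc_finite hFA hPfin hPd hPs hPsym hS0 (N+1), ?_, ?_, ?_⟩
  · -- S0 ⊆ E
    intro z hz
    have hle : tot (Λ.deg z) ≤ N := tot_le_tot (hNv z hz)
    have : z ∈ Acc P S0 (tot (Λ.deg z) + 1) := by
      refine Set.mem_union_right _ (subset_swapSat ?_)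
      exact ⟨Set.mem_union_left _ hz, rfl⟩
    exact acc_mono (by omega) this
  · -- MCE-closure
    intro x hx y hy z hz
    obtain ⟨hzx, hzy, hzd⟩ := hz
    by_cases hcx : tot (Λ.deg x) = tot (Λ.deg z)
    · -- z = x
      have : x = z := hzx.eq_of_deg_eq (eq_of_le_of_tot_le hzx.deg_le (le_of_eq hcx.symm))
      rw [← this]; exact hx
    · by_cases hcy : tot (Λ.deg y) = tot (Λ.deg z)
      · have : y = z := hzy.eq_of_deg_eq (eq_of_le_of_tot_le hzy.deg_le (le_of_eq hcy.symm))
        rw [← this]; exact hy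
      · -- both strictly smaller
        have hxlt : tot (Λ.deg x) < tot (Λ.deg z) :=
          lt_of_le_of_ne (tot_le_tot hzx.deg_le) hcx
        have hylt : tot (Λ.deg y) < tot (Λ.deg z) :=
          lt_of_le_of_ne (tot_le_tot hzy.deg_le) hcy
        have hxA : x ∈ Acc P S0 (tot (Λ.deg z)) :=
          acc_mono (by omega) (acc_strat hPd hPs hx)
        have hyA : y ∈ Acc P S0 (tot (Λ.deg z)) :=
          acc_mono (by omega) (acc_strat hPd hPs hy)
        have hzA : z ∈ Acc P S0 (tot (Λ.deg z) + 1) := by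
          refine Set.mem_union_right _ (subset_swapSat ?_)
          refine ⟨Set.mem_union_right _ ?_, rfl⟩
          exact Set.mem_biUnion hxA (Set.mem_biUnion hyA ⟨hzx, hzy, hzd⟩)
        have hzle : tot (Λ.deg z) ≤ N := by
          rw [hzd] at *
          exact tot_le_tot (sup_le (hdegE _ x hx) (hdegE _ y hy))
        exact acc_mono (by omega) hzA
  · -- swap closure
    intro z hz z' hstep
    exact acc_closed hz hstep

end Orbit

end KGraph
/-! ## Section 3: C*-computations with the generators -/

namespace KGraph

variable {k : ℕ} {Λ : KGraph k}
variable {A : Type} [NormedRing A] [StarRing A] [CStarRing A]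
  [NormedAlgebra ℂ A] [CompleteSpace A] [StarModule ℂ A]
lemma finsum_subtype_eq_sum {β' : Type*} {M : Type*} [AddCommMonoid M]
    {S : Set β'} (hS : S.Finite) (f : β' → M) :
    (∑ᶠ x : ↥S, f ↑x) = ∑ a ∈ hS.toFinset, f a := by
  have := hS.fintype
  rw [finsum_eq_sum_of_fintype, ← Finset.sum_coe_sort (hS.toFinset) f]
  refine Fintype.sum_equiv (Equiv.subtypeEquivRight ?_) _ _ (fun x => rfl)
  intro x
  simp [Set.Finite.mem_toFinset]

variable {X : Set Λ.Path} {T : Λ.Path → Λ.Path → A}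

section Products

variable (hFA : Λ.FinitelyAligned) (hT : Λ.CKFamilyX X T)

include hFA hT in
/-- The product formula (relation (iii)) with a `Finset` sum. -/
lemma prodT {α β l m : Λ.Path} (hα : Λ.rng α ∈ X) (hβ : Λ.rng β ∈ X)
    (hl : Λ.rng l ∈ X) (hm : Λ.rng m ∈ X) (hαβ : Λ.src α = Λ.src β)
    (hlm : Λ.src l = Λ.src m) :
    T α β * T l m = ∑ ab ∈ (hFA β l).toFinset,
      T (Λ.comp α ab.1) (Λ.comp m ab.2) := by
  rw [hT.2.2.1 α β l m hα hβ hl hm hαβ hlm]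
  exact finsum_subtype_eq_sum (hFA β l)
    (fun ab => T (Λ.comp α ab.1) (Λ.comp m ab.2))

lemma toFinset_singleton {β' : Type*} {S : Set β'} (hS : S.Finite) {a : β'}
    (h : S = {a}) : hS.toFinset = {a} := by
  ext x
  simp [Set.Finite.mem_toFinset, h]

include hFA hT in
/-- (P1) `T p q * T q τ = T p τ`. -/
lemma T_mul_T {p q τ : Λ.Path} (hp : Λ.rng p ∈ X) (hq : Λ.rng q ∈ X)
    (hτ : Λ.rng τ ∈ X) (hpq : Λ.src p = Λ.src q) (hqτ : Λ.src q = Λ.src τ) :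
    T p q * T q τ = T p τ := by
  rw [prodT hFA hT hp hq hq hτ hpq hqτ,
    toFinset_singleton (hFA q q) (minExt_self q), Finset.sum_singleton]
  have h1 : Λ.comp p (Λ.src q) = p := by
    rw [← hpq, Λ.comp_id]
  have h2 : Λ.comp τ (Λ.src q) = τ := by
    rw [hqτ, Λ.comp_id]
  rw [h1, h2]

include hFA hT in
/-- (P2) `T p q * T z z = T (p·(z⊘q)) z` for `q ⊑ z`. -/
lemma T_mul_diag {p q z : Λ.Path} (hp : Λ.rng p ∈ X) (hq : Λ.rng q ∈ X)
    (hz : Λ.rng z ∈ X) (hpq : Λ.src p = Λ.src q) (hpre : Λ.Pre q z) :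
    T p q * T z z = T (Λ.comp p (Λ.quot q z)) z := by
  rw [prodT hFA hT hp hq hz hz hpq rfl,
    toFinset_singleton (hFA q z) (minExt_of_pre hpre), Finset.sum_singleton]
  have h2 : Λ.comp z (Λ.src z) = z := Λ.comp_id z
  rw [h2]

include hFA hT in
/-- (P3) `T z z * T q τ = T z (τ·(z⊘q))` for `q ⊑ z`. -/
lemma diag_mul_T {z q τ : Λ.Path} (hz : Λ.rng z ∈ X) (hq : Λ.rng q ∈ X)
    (hτ : Λ.rng τ ∈ X) (hqτ : Λ.src q = Λ.src τ) (hpre : Λ.Pre q z) :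
    T z z * T q τ = T z (Λ.comp τ (Λ.quot q z)) := by
  rw [prodT hFA hT hz hz hq hτ rfl hqτ,
    toFinset_singleton (hFA z q) (minExt_of_pre' hpre), Finset.sum_singleton]
  have h1 : Λ.comp z (Λ.src z) = z := Λ.comp_id z
  rw [h1]

include hFA hT in
/-- (P4) diagonal products are sums of diagonals. -/
lemma diag_mul_diag {x y : Λ.Path} (hx : Λ.rng x ∈ X) (hy : Λ.rng y ∈ X) :
    T x x * T y y = ∑ ab ∈ (hFA x y).toFinset,
      T (Λ.comp x ab.1) (Λ.comp x ab.1) := by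
  rw [prodT hFA hT hx hx hy hy rfl rfl]
  refine Finset.sum_congr rfl fun ab hab => ?_
  have hmem : ab ∈ Λ.minExt x y := (Set.Finite.mem_toFinset _).mp hab
  rw [← hmem.2.2.1]

include hFA hT in
/-- (P4') diagonals commute. -/
lemma diag_comm {x y : Λ.Path} (hx : Λ.rng x ∈ X) (hy : Λ.rng y ∈ X) :
    T x x * T y y = T y y * T x x := by
  rw [diag_mul_diag hFA hT hx hy, diag_mul_diag hFA hT hy hx]
  refine Finset.sum_nbij' (fun ab => (ab.2, ab.1)) (fun ab => (ab.2, ab.1))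
    ?_ ?_ ?_ ?_ ?_
  · intro ab hab
    have hmem : ab ∈ Λ.minExt x y := (Set.Finite.mem_toFinset _).mp hab
    refine (Set.Finite.mem_toFinset _).mpr ?_
    rw [minExt_swap]
    exact ⟨ab, hmem, rfl⟩
  · intro ab hab
    have hmem : ab ∈ Λ.minExt y x := (Set.Finite.mem_toFinset _).mp hab
    refine (Set.Finite.mem_toFinset _).mpr ?_
    have := (minExt_swap (Λ := Λ) x y) ▸ hmem
    obtain ⟨cd, hcd, hab2⟩ := this
    have : ab = (cd.2, cd.1) := hab2.symm
    rw [this]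
    simpa using hcd
  · intro ab _; rfl
  · intro ab _; rfl
  · intro ab hab
    have hmem : ab ∈ Λ.minExt x y := (Set.Finite.mem_toFinset _).mp hab
    dsimp only
    rw [hmem.2.2.1]

include hFA hT in
/-- (P2') `T p q * T z z = T p q` when `z ⊑ q`. -/
lemma T_mul_diag' {p q z : Λ.Path} (hp : Λ.rng p ∈ X) (hq : Λ.rng q ∈ X)
    (hz : Λ.rng z ∈ X) (hpq : Λ.src p = Λ.src q) (hpre : Λ.Pre z q) :
    T p q * T z z = T p q := by
  rw [prodT hFA hT hp hq hz hz hpq rfl,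
    toFinset_singleton (hFA q z) (minExt_of_pre' hpre), Finset.sum_singleton]
  have h1 : Λ.comp p (Λ.src q) = p := by rw [← hpq, Λ.comp_id]
  have h2 : Λ.comp z (Λ.quot z q) = q := (quot_spec hpre).2.symm
  rw [h1, h2]

end Products

section DMachine

/-- A defect factor `T q q - T (qa) (qa)`. -/
noncomputable def Df (T : Λ.Path → Λ.Path → A) (q a : Λ.Path) : A :=
  T q q - T (Λ.comp q a) (Λ.comp q a)

open Classical in
/-- Product of defect factors over a finite set of extensions. -/
noncomputable def DProd (T : Λ.Path → Λ.Path → A) (q : Λ.Path) (J : Finset Λ.Path) : A :=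
  if h : (↑J : Set Λ.Path).Pairwise (fun a b => Commute (Df T q a) (Df T q b))
  then J.noncommProd (Df T q) h else 0

variable (hFA : Λ.FinitelyAligned) (hT : Λ.CKFamilyX X T)

noncomputable local instance : DecidableEq Λ.Path := Classical.decEq _

lemma pre_comp {q a : Λ.Path} (ha : Λ.rng a = Λ.src q) : Λ.Pre q (Λ.comp q a) :=
  ⟨a, ha.symm, rfl⟩

lemma quot_comp_self {q a : Λ.Path} (ha : Λ.rng a = Λ.src q) :
    Λ.quot q (Λ.comp q a) = a := quot_eq ha.symm rfl

lemma rng_qa {q a : Λ.Path} (ha : Λ.rng a = Λ.src q) :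
    Λ.rng (Λ.comp q a) = Λ.rng q := Λ.rng_comp q a ha.symm

include hFA hT in
lemma e_mul_e_self {q : Λ.Path} (hq : Λ.rng q ∈ X) : T q q * T q q = T q q :=
  T_mul_T hFA hT hq hq hq rfl rfl

include hFA hT in
lemma e_mul_e_pre {q z : Λ.Path} (hq : Λ.rng q ∈ X) (hz : Λ.rng z ∈ X)
    (hpre : Λ.Pre q z) : T q q * T z z = T z z := by
  rw [T_mul_diag hFA hT hq hq hz rfl hpre, ← (quot_spec hpre).2]

include hFA hT in
lemma e_mul_e_pre' {q z : Λ.Path} (hq : Λ.rng q ∈ X) (hz : Λ.rng z ∈ X)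
    (hpre : Λ.Pre q z) : T z z * T q q = T z z := by
  rw [diag_mul_T hFA hT hz hq hq rfl hpre, ← (quot_spec hpre).2]

include hFA hT in
/-- Commutation of defect factors. -/
lemma df_comm {q a b : Λ.Path} (hq : Λ.rng q ∈ X) (ha : Λ.rng a = Λ.src q)
    (hb : Λ.rng b = Λ.src q) : Commute (Df T q a) (Df T q b) := by
  have hqa : Λ.rng (Λ.comp q a) ∈ X := by rw [rng_qa ha]; exact hq
  have hqb : Λ.rng (Λ.comp q b) ∈ X := by rw [rng_qa hb]; exact hq
  unfold Commute SemiconjBy Df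
  simp only [mul_sub, sub_mul]
  rw [e_mul_e_self hFA hT hq,
    e_mul_e_pre hFA hT hq hqb (pre_comp hb),
    e_mul_e_pre' hFA hT hq hqa (pre_comp ha),
    e_mul_e_pre hFA hT hq hqa (pre_comp ha),
    e_mul_e_pre' hFA hT hq hqb (pre_comp hb),
    diag_comm hFA hT hqa hqb]
  abel

include hFA hT in
lemma dpair {q : Λ.Path} {J : Finset Λ.Path} (hq : Λ.rng q ∈ X)
    (hJ : ∀ a ∈ J, Λ.rng a = Λ.src q) :
    (↑J : Set Λ.Path).Pairwise (fun a b => Commute (Df T q a) (Df T q b)) :=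
  fun a haJ b hbJ _ => df_comm hFA hT hq (hJ a haJ) (hJ b hbJ)

include hFA hT in
lemma DProd_eq {q : Λ.Path} {J : Finset Λ.Path} (hq : Λ.rng q ∈ X)
    (hJ : ∀ a ∈ J, Λ.rng a = Λ.src q) :
    DProd T q J = J.noncommProd (Df T q) (dpair hFA hT hq hJ) := by
  unfold DProd
  rw [dif_pos (dpair hFA hT hq hJ)]

lemma DProd_empty (q : Λ.Path) : DProd T q (∅ : Finset Λ.Path) = 1 := by
  unfold DProd
  rw [dif_pos (by simp)]
  simp

include hFA hT in
lemma DProd_insert {q a : Λ.Path} {J : Finset Λ.Path} (hq : Λ.rng q ∈ X)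
    (hJ : ∀ b ∈ insert a J, Λ.rng b = Λ.src q) (haJ : a ∉ J) :
    DProd T q (insert a J) = Df T q a * DProd T q J := by
  rw [DProd_eq hFA hT hq hJ, DProd_eq hFA hT hq (fun b hb => hJ b (Finset.mem_insert_of_mem hb))]
  exact Finset.noncommProd_insert_of_notMem _ _ _ _ haJ

include hFA hT in
lemma commute_DProd {q : Λ.Path} {J : Finset Λ.Path} {x : A} (hq : Λ.rng q ∈ X)
    (hJ : ∀ a ∈ J, Λ.rng a = Λ.src q) (hx : ∀ a ∈ J, Commute x (Df T q a)) :
    Commute x (DProd T q J) := by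
  classical
  induction J using Finset.induction_on with
  | empty => rw [DProd_empty]; exact Commute.one_right x
  | @insert a J haJ ih =>
      rw [DProd_insert hFA hT hq hJ haJ]
      exact Commute.mul_right (hx a (Finset.mem_insert_self a J))
        (ih (fun b hb => hJ b (Finset.mem_insert_of_mem hb))
          (fun b hb => hx b (Finset.mem_insert_of_mem hb)))

include hFA hT in
lemma DProd_extract {q a : Λ.Path} {J : Finset Λ.Path} (hq : Λ.rng q ∈ X)
    (hJ : ∀ b ∈ J, Λ.rng b = Λ.src q) (haJ : a ∈ J) :
    DProd T q J = Df T q a * DProd T q (J.erase a) := by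
  have h2 : ∀ b ∈ insert a (J.erase a), Λ.rng b = Λ.src q := by
    intro b hb
    exact hJ b (by rwa [Finset.insert_erase haJ] at hb)
  have h3 := DProd_insert hFA hT hq h2 (Finset.notMem_erase a J)
  rwa [Finset.insert_erase haJ] at h3

include hFA hT in
lemma DProd_extract' {q a : Λ.Path} {J : Finset Λ.Path} (hq : Λ.rng q ∈ X)
    (hJ : ∀ b ∈ J, Λ.rng b = Λ.src q) (haJ : a ∈ J) :
    DProd T q J = DProd T q (J.erase a) * Df T q a := by
  rw [DProd_extract hFA hT hq hJ haJ]
  exact (commute_DProd hFA hT hq (fun b hb => hJ b (Finset.mem_of_mem_erase hb))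
    (fun b hb => df_comm hFA hT hq (hJ a haJ) (hJ b (Finset.mem_of_mem_erase hb)))).eq

include hFA hT in
lemma df_mul_diag_zero {q a z : Λ.Path} (hq : Λ.rng q ∈ X) (hz : Λ.rng z ∈ X)
    (ha : Λ.rng a = Λ.src q) (hqz : Λ.Pre q z) (haz : Λ.Pre (Λ.comp q a) z) :
    Df T q a * T z z = 0 := by
  have hqa : Λ.rng (Λ.comp q a) ∈ X := by rw [rng_qa ha]; exact hq
  unfold Df
  rw [sub_mul, e_mul_e_pre hFA hT hq hz hqz, e_mul_e_pre hFA hT hqa hz haz, sub_self]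

include hFA hT in
lemma diag_mul_df_zero {σ b z : Λ.Path} (hσ : Λ.rng σ ∈ X) (hz : Λ.rng z ∈ X)
    (hb : Λ.rng b = Λ.src σ) (hσz : Λ.Pre σ z) (hbz : Λ.Pre (Λ.comp σ b) z) :
    T z z * Df T σ b = 0 := by
  have hσb : Λ.rng (Λ.comp σ b) ∈ X := by rw [rng_qa hb]; exact hσ
  unfold Df
  rw [mul_sub, e_mul_e_pre' hFA hT hσ hz hσz, e_mul_e_pre' hFA hT hσb hz hbz, sub_self]

include hFA hT in
/-- (K1) right kill. -/
lemma DProd_kill_right {q z a : Λ.Path} {J : Finset Λ.Path} (hq : Λ.rng q ∈ X)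
    (hz : Λ.rng z ∈ X) (hJ : ∀ b ∈ J, Λ.rng b = Λ.src q) (hqz : Λ.Pre q z)
    (haJ : a ∈ J) (haz : Λ.Pre (Λ.comp q a) z) : DProd T q J * T z z = 0 := by
  rw [DProd_extract' hFA hT hq hJ haJ, mul_assoc,
    df_mul_diag_zero hFA hT hq hz (hJ a haJ) hqz haz, mul_zero]

include hFA hT in
/-- (K2) left kill. -/
lemma DProd_kill_left {σ z b : Λ.Path} {J' : Finset Λ.Path} (hσ : Λ.rng σ ∈ X)
    (hz : Λ.rng z ∈ X) (hJ : ∀ c ∈ J', Λ.rng c = Λ.src σ) (hσz : Λ.Pre σ z)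
    (hbJ : b ∈ J') (hbz : Λ.Pre (Λ.comp σ b) z) : T z z * DProd T σ J' = 0 := by
  rw [DProd_extract hFA hT hσ hJ hbJ, ← mul_assoc,
    diag_mul_df_zero hFA hT hσ hz (hJ b hbJ) hσz hbz, zero_mul]

include hFA hT in
lemma df_idem {q a : Λ.Path} (hq : Λ.rng q ∈ X) (ha : Λ.rng a = Λ.src q) :
    Df T q a * Df T q a = Df T q a := by
  have hqa : Λ.rng (Λ.comp q a) ∈ X := by rw [rng_qa ha]; exact hq
  unfold Df
  rw [sub_mul, mul_sub, mul_sub, e_mul_e_self hFA hT hq,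
    e_mul_e_pre hFA hT hq hqa (pre_comp ha),
    e_mul_e_pre' hFA hT hq hqa (pre_comp ha),
    e_mul_e_self hFA hT hqa]
  abel

include hFA hT in
/-- (U) union of defect products. -/
lemma DProd_union {q : Λ.Path} {J J' : Finset Λ.Path} (hq : Λ.rng q ∈ X)
    (hJ : ∀ a ∈ J ∪ J', Λ.rng a = Λ.src q) :
    DProd T q J * DProd T q J' = DProd T q (J ∪ J') := by
  induction J using Finset.induction_on with
  | empty => rw [DProd_empty, one_mul, Finset.empty_union]
  | @insert a J haJ ih =>
      have hins : ∀ b ∈ insert a J, Λ.rng b = Λ.src q := by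
        intro b hb
        exact hJ b (Finset.mem_union_left _ hb)
      have hJJ' : ∀ b ∈ J ∪ J', Λ.rng b = Λ.src q := by
        intro b hb
        rcases Finset.mem_union.mp hb with hb | hb
        · exact hJ b (Finset.mem_union_left _ (Finset.mem_insert_of_mem hb))
        · exact hJ b (Finset.mem_union_right _ hb)
      rw [DProd_insert hFA hT hq hins haJ, mul_assoc, ih hJJ', Finset.insert_union]
      by_cases hmem : a ∈ J ∪ J'
      · rw [Finset.insert_eq_self.mpr hmem]
        rw [DProd_extract hFA hT hq hJJ' hmem, ← mul_assoc,
          df_idem hFA hT hq (hJJ' a hmem)]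
      · rw [DProd_insert hFA hT hq ?_ hmem]
        intro b hb
        rcases Finset.mem_insert.mp hb with rfl | hb
        · exact hJ b (Finset.mem_union_left _ (Finset.mem_insert_self b J))
        · exact hJJ' b hb

include hFA hT in
lemma df_pull {q τ a : Λ.Path} (hq : Λ.rng q ∈ X) (hτ : Λ.rng τ ∈ X)
    (hst : Λ.src q = Λ.src τ) (ha : Λ.rng a = Λ.src q) :
    Df T q a * T q τ = T q τ * Df T τ a := by
  have ha' : Λ.rng a = Λ.src τ := by rw [ha, hst]
  have hqa : Λ.rng (Λ.comp q a) ∈ X := by rw [rng_qa ha]; exact hq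
  have hτa : Λ.rng (Λ.comp τ a) ∈ X := by rw [rng_qa ha']; exact hτ
  unfold Df
  rw [sub_mul, mul_sub]
  rw [T_mul_T hFA hT hq hq hτ rfl hst, T_mul_T hFA hT hq hτ hτ hst rfl]
  rw [diag_mul_T hFA hT hqa hq hτ hst (pre_comp ha), quot_comp_self ha]
  rw [T_mul_diag hFA hT hq hτ hτa hst (pre_comp ha'), quot_comp_self ha']

include hFA hT in
/-- (PT) pull a defect product through `T q τ`. -/
lemma DProd_pull {q τ : Λ.Path} {J : Finset Λ.Path} (hq : Λ.rng q ∈ X)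
    (hτ : Λ.rng τ ∈ X) (hst : Λ.src q = Λ.src τ)
    (hJ : ∀ a ∈ J, Λ.rng a = Λ.src q) :
    DProd T q J * T q τ = T q τ * DProd T τ J := by
  induction J using Finset.induction_on with
  | empty => rw [DProd_empty, DProd_empty, one_mul, mul_one]
  | @insert a J haJ ih =>
      have hJ' : ∀ b ∈ J, Λ.rng b = Λ.src q := fun b hb => hJ b (Finset.mem_insert_of_mem hb)
      have hJτ : ∀ b ∈ insert a J, Λ.rng b = Λ.src τ := by
        intro b hb
        rw [← hst]; exact hJ b hb
      rw [DProd_insert hFA hT hq hJ haJ, mul_assoc, ih hJ', ← mul_assoc,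
        df_pull hFA hT hq hτ hst (hJ a (Finset.mem_insert_self a J)), mul_assoc,
        ← DProd_insert hFA hT hτ hJτ haJ]

include hFA hT in
lemma star_diag {z : Λ.Path} (hz : Λ.rng z ∈ X) : star (T z z) = T z z :=
  (hT.2.1 z z hz hz rfl).trans rfl

include hFA hT in
lemma star_df {q a : Λ.Path} (hq : Λ.rng q ∈ X) (ha : Λ.rng a = Λ.src q) :
    star (Df T q a) = Df T q a := by
  have hqa : Λ.rng (Λ.comp q a) ∈ X := by rw [rng_qa ha]; exact hq
  unfold Df
  rw [star_sub, star_diag hFA hT hq, star_diag hFA hT hqa]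

include hFA hT in
lemma star_DProd {q : Λ.Path} {J : Finset Λ.Path} (hq : Λ.rng q ∈ X)
    (hJ : ∀ a ∈ J, Λ.rng a = Λ.src q) : star (DProd T q J) = DProd T q J := by
  induction J using Finset.induction_on with
  | empty => rw [DProd_empty, star_one]
  | @insert a J haJ ih =>
      have hJ' : ∀ b ∈ J, Λ.rng b = Λ.src q := fun b hb => hJ b (Finset.mem_insert_of_mem hb)
      rw [DProd_insert hFA hT hq hJ haJ, star_mul, ih hJ',
        star_df hFA hT hq (hJ a (Finset.mem_insert_self a J))]
      exact ((commute_DProd hFA hT hq hJ' (fun b hb =>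
        df_comm hFA hT hq (hJ a (Finset.mem_insert_self a J)) (hJ' b hb))).symm).eq

include hFA hT in
lemma e_DProd_comm {q : Λ.Path} {J : Finset Λ.Path} (hq : Λ.rng q ∈ X)
    (hJ : ∀ a ∈ J, Λ.rng a = Λ.src q) :
    T q q * DProd T q J = DProd T q J * T q q := by
  refine (commute_DProd hFA hT hq hJ (fun a ha => ?_)).eq
  have hqa : Λ.rng (Λ.comp q a) ∈ X := by rw [rng_qa (hJ a ha)]; exact hq
  unfold Commute SemiconjBy Df
  rw [mul_sub, sub_mul, e_mul_e_self hFA hT hq,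
    e_mul_e_pre hFA hT hq hqa (pre_comp (hJ a ha)),
    e_mul_e_pre' hFA hT hq hqa (pre_comp (hJ a ha))]

end DMachine

section Theta

variable (hFA : Λ.FinitelyAligned) (hT : Λ.CKFamilyX X T)
variable {E : Set Λ.Path}

noncomputable local instance inst_s9 : DecidableEq Λ.Path := Classical.decEq _

/-- Extensions of `r` arising from minimal common extensions with members of `E`. -/
def XSet (E : Set Λ.Path) (r : Λ.Path) : Set Λ.Path :=
  {a | Λ.deg a ≠ 0 ∧ ∃ σ ∈ E, ∃ b, (a, b) ∈ Λ.minExt r σ}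

/-- All such extensions at a common source vertex. -/
def BigSet (E : Set Λ.Path) (v : Λ.Path) : Set Λ.Path :=
  ⋃ r ∈ {r ∈ E | Λ.src r = v}, XSet E r

lemma xset_rng {r a : Λ.Path} (h : a ∈ XSet E r) : Λ.rng a = Λ.src r := by
  obtain ⟨-, σ, -, b, hab, -, -, -⟩ := h
  exact hab.symm

lemma xset_deg {r a : Λ.Path} (h : a ∈ XSet E r) : Λ.deg a ≠ 0 := h.1

lemma bigset_rng {v a : Λ.Path} (h : a ∈ BigSet E v) : Λ.rng a = v := by
  obtain ⟨S, ⟨r, hrS⟩, haS⟩ := h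
  simp only at hrS
  rw [← hrS] at haS
  obtain ⟨S', ⟨hr, hS'⟩, ha⟩ := haS
  simp only at hS'
  rw [← hS'] at ha
  rw [xset_rng ha, hr.2]

lemma bigset_deg {v a : Λ.Path} (h : a ∈ BigSet E v) : Λ.deg a ≠ 0 := by
  obtain ⟨S, ⟨r, hrS⟩, haS⟩ := h
  simp only at hrS
  rw [← hrS] at haS
  obtain ⟨S', ⟨hr, hS'⟩, ha⟩ := haS
  simp only at hS'
  rw [← hS'] at ha
  exact xset_deg ha

lemma xset_subset_bigset {r : Λ.Path} (hr : r ∈ E) : XSet E r ⊆ BigSet E (Λ.src r) :=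
  fun a ha => Set.mem_biUnion ⟨hr, rfl⟩ ha

include hFA in
lemma xset_finite (hE : E.Finite) (r : Λ.Path) : (XSet E r).Finite := by
  have hsub : XSet E r ⊆ ⋃ σ ∈ E, Prod.fst '' (Λ.minExt r σ) := by
    rintro a ⟨-, σ, hσ, b, hab⟩
    exact Set.mem_biUnion hσ ⟨(a, b), hab, rfl⟩
  exact Set.Finite.subset
    (Set.Finite.biUnion hE fun σ _ => (hFA r σ).image _) hsub

include hFA in
lemma bigset_finite (hE : E.Finite) (v : Λ.Path) : (BigSet E v).Finite :=
  Set.Finite.biUnion (hE.subset (fun r hr => hr.1)) fun r _ => xset_finite hFA hE r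

/-- The spanning family of the approximating finite-dimensional algebra. -/
def ThetaSet (T : Λ.Path → Λ.Path → A) (X : Set Λ.Path) (E : Set Λ.Path) : Set A :=
  {x | ∃ p, ∃ q, ∃ J : Finset Λ.Path, p ∈ E ∧ q ∈ E ∧ Λ.rng p ∈ X ∧ Λ.rng q ∈ X ∧
    Λ.src p = Λ.src q ∧ Λ.deg p = Λ.deg q ∧
    (XSet E p ∪ XSet E q ⊆ ↑J) ∧ (↑J ⊆ BigSet E (Λ.src p)) ∧
    x = T p q * DProd T q J}

include hFA in
lemma thetaSet_finite (hE : E.Finite) : (ThetaSet T X E).Finite := by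
  have hsub : ThetaSet T X E ⊆ ⋃ p ∈ E, ⋃ q ∈ E,
      (fun J : Finset Λ.Path => T p q * DProd T q J) ''
        {J : Finset Λ.Path | ↑J ⊆ BigSet E (Λ.src p)} := by
    rintro x ⟨p, q, J, hp, hq, -, -, -, -, -, hJ2, hx⟩
    exact Set.mem_biUnion hp (Set.mem_biUnion hq ⟨J, hJ2, hx.symm⟩)
  refine Set.Finite.subset ?_ hsub
  refine Set.Finite.biUnion hE fun p _ => Set.Finite.biUnion hE fun q _ => ?_
  refine Set.Finite.image _ ?_
  have : {J : Finset Λ.Path | ↑J ⊆ BigSet E (Λ.src p)} ⊆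
      (fun J : Finset Λ.Path => (↑J : Set Λ.Path)) ⁻¹'
        {S : Set Λ.Path | S ⊆ BigSet E (Λ.src p)} := by
    intro J hJ
    exact hJ
  refine Set.Finite.subset ?_ this
  refine Set.Finite.preimage (Set.injOn_of_injective Finset.coe_injective) ?_
  exact Set.Finite.finite_subsets (bigset_finite hFA hE (Λ.src p))

include hFA hT in
/-- Middle cross-kill. -/
lemma mid_zero {q σ : Λ.Path} {J J' : Finset Λ.Path} (hq : Λ.rng q ∈ X)
    (hσ : Λ.rng σ ∈ X) (hqσ : q ≠ σ) (hqE : q ∈ E) (hσE : σ ∈ E)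
    (hJr : ∀ a ∈ J, Λ.rng a = Λ.src q) (hJ'r : ∀ a ∈ J', Λ.rng a = Λ.src σ)
    (hJX : XSet E q ⊆ ↑J) (hJ'X : XSet E σ ⊆ ↑J') :
    DProd T q J * (T q q * (T σ σ * DProd T σ J')) = 0 := by
  rw [show T q q * (T σ σ * DProd T σ J') = (T q q * T σ σ) * DProd T σ J' from
    (mul_assoc _ _ _).symm]
  rw [diag_mul_diag hFA hT hq hσ, Finset.sum_mul, Finset.mul_sum]
  refine Finset.sum_eq_zero fun ab hab => ?_
  have hmem : ab ∈ Λ.minExt q σ := (Set.Finite.mem_toFinset _).mp hab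
  obtain ⟨h1, h2, h3, h4⟩ := hmem
  have hzX : Λ.rng (Λ.comp q ab.1) ∈ X := by
    rw [Λ.rng_comp _ _ h1]; exact hq
  by_cases hd1 : Λ.deg ab.1 = 0
  · -- then the second part is nontrivial and kills on the left
    have hz : Λ.comp q ab.1 = q := comp_vertex hd1 h1
    have hd2 : Λ.deg ab.2 ≠ 0 := by
      intro hd2
      exact hqσ (by rw [← comp_vertex hd2 h2, ← h3, hz])
    have hab2 : ab.2 ∈ XSet E σ := by
      refine ⟨hd2, q, hqE, ab.1, ?_⟩
      rw [minExt_swap]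
      exact ⟨ab, ⟨h1, h2, h3, h4⟩, rfl⟩
    rw [DProd_kill_left hFA hT hσ hzX hJ'r (⟨ab.2, h2, h3⟩)
      (hJ'X hab2) (by rw [h3]; exact Pre.refl _), mul_zero]
  · -- the first part is nontrivial and kills on the right
    have hab1 : ab.1 ∈ XSet E q := ⟨hd1, σ, hσE, ab.2, h1, h2, h3, h4⟩
    rw [← mul_assoc,
      DProd_kill_right hFA hT hq hzX hJr (pre_comp h1.symm) (hJX hab1)
        (Pre.refl _), zero_mul]

include hFA hT in
/-- Orthogonality of Theta elements with distinct middle paths. -/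
lemma theta_mul_ne {p q σ τ : Λ.Path} {J J' : Finset Λ.Path}
    (hp : Λ.rng p ∈ X) (hq : Λ.rng q ∈ X) (hσ : Λ.rng σ ∈ X) (hτ : Λ.rng τ ∈ X)
    (hpq : Λ.src p = Λ.src q) (hστ : Λ.src σ = Λ.src τ) (hqσ : q ≠ σ)
    (hqE : q ∈ E) (hσE : σ ∈ E)
    (hJr : ∀ a ∈ J, Λ.rng a = Λ.src q) (hJ'r : ∀ a ∈ J', Λ.rng a = Λ.src σ)
    (hJX : XSet E q ⊆ ↑J) (hJ'X : XSet E σ ⊆ ↑J') :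
    (T p q * DProd T q J) * (T σ τ * DProd T τ J') = 0 := by
  have hJ'τ : ∀ a ∈ J', Λ.rng a = Λ.src τ := by
    intro a ha; rw [hJ'r a ha, hστ]
  have hx : T p q * DProd T q J = (T p q * DProd T q J) * T q q := by
    calc T p q * DProd T q J = (T p q * T q q) * DProd T q J := by
          rw [T_mul_T hFA hT hp hq hq hpq rfl]
      _ = T p q * (T q q * DProd T q J) := by rw [mul_assoc]
      _ = T p q * (DProd T q J * T q q) := by rw [e_DProd_comm hFA hT hq hJr]
      _ = (T p q * DProd T q J) * T q q := by rw [mul_assoc]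
  have hy : DProd T σ J' * T σ τ = T σ σ * (DProd T σ J' * T σ τ) := by
    calc DProd T σ J' * T σ τ = DProd T σ J' * (T σ σ * T σ τ) := by
          rw [T_mul_T hFA hT hσ hσ hτ rfl hστ]
      _ = (DProd T σ J' * T σ σ) * T σ τ := by rw [mul_assoc]
      _ = (T σ σ * DProd T σ J') * T σ τ := by rw [e_DProd_comm hFA hT hσ hJ'r]
      _ = T σ σ * (DProd T σ J' * T σ τ) := by rw [mul_assoc]
  have key3 : ∀ Z : A, DProd T q J * (T q q * (T σ σ * (DProd T σ J' * Z))) = 0 := by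
    intro Z
    have h0 := mid_zero hFA hT (E := E) hq hσ hqσ hqE hσE hJr hJ'r hJX hJ'X
    calc DProd T q J * (T q q * (T σ σ * (DProd T σ J' * Z)))
        = (DProd T q J * (T q q * (T σ σ * DProd T σ J'))) * Z := by
          simp only [mul_assoc]
      _ = 0 := by rw [h0, zero_mul]
  rw [← DProd_pull hFA hT hσ hτ hστ hJ'r]
  rw [hx, hy]
  calc ((T p q * DProd T q J) * T q q) * (T σ σ * (DProd T σ J' * T σ τ))
      = T p q * (DProd T q J * (T q q * (T σ σ * (DProd T σ J' * T σ τ)))) := by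
        simp only [mul_assoc]
    _ = 0 := by rw [key3, mul_zero]

include hFA hT in
/-- Composition of Theta elements with equal middle paths. -/
lemma theta_mul_eq {p q τ : Λ.Path} {J J' : Finset Λ.Path}
    (hp : Λ.rng p ∈ X) (hq : Λ.rng q ∈ X) (hτ : Λ.rng τ ∈ X)
    (hpq : Λ.src p = Λ.src q) (hqτ : Λ.src q = Λ.src τ)
    (hJr : ∀ a ∈ J, Λ.rng a = Λ.src q) (hJ'r : ∀ a ∈ J', Λ.rng a = Λ.src τ) :
    (T p q * DProd T q J) * (T q τ * DProd T τ J') = T p τ * DProd T τ (J ∪ J') := by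
  have hJτ : ∀ a ∈ J ∪ J', Λ.rng a = Λ.src τ := by
    intro a ha
    rcases Finset.mem_union.mp ha with ha | ha
    · rw [hJr a ha, hqτ]
    · exact hJ'r a ha
  calc (T p q * DProd T q J) * (T q τ * DProd T τ J')
      = T p q * ((DProd T q J * T q τ) * DProd T τ J') := by simp only [mul_assoc]
    _ = T p q * ((T q τ * DProd T τ J) * DProd T τ J') := by
        rw [DProd_pull hFA hT hq hτ hqτ hJr]
    _ = (T p q * T q τ) * (DProd T τ J * DProd T τ J') := by simp only [mul_assoc]
    _ = T p τ * DProd T τ (J ∪ J') := by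
        rw [T_mul_T hFA hT hp hq hτ hpq hqτ, DProd_union hFA hT hτ hJτ]

include hFA hT in
/-- Star of a Theta element. -/
lemma theta_star {p q : Λ.Path} {J : Finset Λ.Path}
    (hp : Λ.rng p ∈ X) (hq : Λ.rng q ∈ X) (hpq : Λ.src p = Λ.src q)
    (hJr : ∀ a ∈ J, Λ.rng a = Λ.src q) :
    star (T p q * DProd T q J) = T q p * DProd T p J := by
  have hJp : ∀ a ∈ J, Λ.rng a = Λ.src p := by
    intro a ha; rw [hJr a ha, hpq]
  rw [star_mul, star_DProd hFA hT hq hJr, hT.2.1 p q hp hq hpq]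
  exact DProd_pull hFA hT hq hp hpq.symm hJr

/-- Balanced extension targets of the expansion. -/
def EBal (T : Λ.Path → Λ.Path → A) (E : Set Λ.Path) (p q : Λ.Path) : Set A :=
  {x | ∃ w, Λ.src q = Λ.rng w ∧ Λ.deg w ≠ 0 ∧ Λ.comp q w ∈ E ∧
    x = T (Λ.comp p w) (Λ.comp q w)}

include hFA hT in
lemma exp_deep (hE : ∀ x ∈ E, ∀ y ∈ E, Λ.MCE x y ⊆ E)
    {p q : Λ.Path} (hp : Λ.rng p ∈ X) (hq : Λ.rng q ∈ X) (hpq : Λ.src p = Λ.src q)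
    {J : Finset Λ.Path} (hJr : ∀ a ∈ J, Λ.rng a = Λ.src q)
    (hJE : ∀ a ∈ J, Λ.comp q a ∈ E) :
    ∀ w, Λ.src q = Λ.rng w → Λ.deg w ≠ 0 → Λ.comp q w ∈ E →
      T (Λ.comp p w) (Λ.comp q w) * DProd T q J ∈
        Submodule.span ℂ (EBal T E p q) := by
  induction J using Finset.induction_on with
  | empty =>
      intro w hw hdw hwE
      rw [DProd_empty, mul_one]
      exact Submodule.subset_span ⟨w, hw, hdw, hwE, rfl⟩
  | @insert a J haJ ih =>
      intro w hw hdw hwE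
      have hJr' : ∀ b ∈ J, Λ.rng b = Λ.src q :=
        fun b hb => hJr b (Finset.mem_insert_of_mem hb)
      have hJE' : ∀ b ∈ J, Λ.comp q b ∈ E :=
        fun b hb => hJE b (Finset.mem_insert_of_mem hb)
      have ha : Λ.rng a = Λ.src q := hJr a (Finset.mem_insert_self a J)
      have hw' : Λ.src p = Λ.rng w := by rw [hpq, hw]
      have hpwX : Λ.rng (Λ.comp p w) ∈ X := by rw [Λ.rng_comp _ _ hw']; exact hp
      have hqwX : Λ.rng (Λ.comp q w) ∈ X := by rw [Λ.rng_comp _ _ hw]; exact hq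
      have hqaX : Λ.rng (Λ.comp q a) ∈ X := by rw [rng_qa ha]; exact hq
      have hsrcw : Λ.src (Λ.comp p w) = Λ.src (Λ.comp q w) := by
        rw [Λ.src_comp _ _ hw', Λ.src_comp _ _ hw]
      rw [DProd_insert hFA hT hq hJr haJ, ← mul_assoc]
      have habs : T (Λ.comp p w) (Λ.comp q w) * T q q = T (Λ.comp p w) (Λ.comp q w) :=
        T_mul_diag' hFA hT hpwX hqwX hq hsrcw ⟨w, hw, rfl⟩
      have hexp := prodT hFA hT hpwX hqwX hqaX hqaX hsrcw rfl
      unfold Df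
      rw [mul_sub, habs, hexp, sub_mul, Finset.sum_mul]
      refine Submodule.sub_mem _ (ih hJr' hJE' w hw hdw hwE)
        (Submodule.sum_mem _ fun cd hcd => ?_)
      obtain ⟨h1, h2, h3, h4⟩ := (Set.Finite.mem_toFinset _).mp hcd
      have hsw : Λ.src w = Λ.rng cd.1 := by
        rw [← Λ.src_comp q w hw]; exact h1
      have e1 : Λ.comp (Λ.comp p w) cd.1 = Λ.comp p (Λ.comp w cd.1) :=
        Λ.comp_assoc p w cd.1 hw' hsw
      have e2 : Λ.comp (Λ.comp q a) cd.2 = Λ.comp q (Λ.comp w cd.1) := by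
        rw [← h3, Λ.comp_assoc q w cd.1 hw hsw]
      rw [e1, e2]
      refine ih hJr' hJE' (Λ.comp w cd.1) ?_ ?_ ?_
      · rw [hw, Λ.rng_comp w cd.1 hsw]
      · intro h0
        apply hdw
        have hdc := Λ.deg_comp w cd.1 hsw
        rw [h0] at hdc
        funext i
        have h0i := congrFun hdc.symm i
        simp only [Pi.add_apply, Pi.zero_apply] at h0i ⊢
        omega
      · rw [← Λ.comp_assoc q w cd.1 hw hsw]
        exact hE _ hwE _ (hJE a (Finset.mem_insert_self a J))
          (minExt_mem_mce ⟨h1, h2, h3, h4⟩)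

include hFA hT in
lemma exp_top (hE : ∀ x ∈ E, ∀ y ∈ E, Λ.MCE x y ⊆ E)
    {p q : Λ.Path} (hp : Λ.rng p ∈ X) (hq : Λ.rng q ∈ X) (hpq : Λ.src p = Λ.src q)
    {J : Finset Λ.Path} (hJr : ∀ a ∈ J, Λ.rng a = Λ.src q)
    (hJd : ∀ a ∈ J, Λ.deg a ≠ 0) (hJE : ∀ a ∈ J, Λ.comp q a ∈ E) :
    T p q * DProd T q J - T p q ∈ Submodule.span ℂ (EBal T E p q) := by
  induction J using Finset.induction_on with
  | empty =>
      rw [DProd_empty, mul_one, sub_self]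
      exact Submodule.zero_mem _
  | @insert a J haJ ih =>
      have hJr' : ∀ b ∈ J, Λ.rng b = Λ.src q :=
        fun b hb => hJr b (Finset.mem_insert_of_mem hb)
      have hJd' : ∀ b ∈ J, Λ.deg b ≠ 0 :=
        fun b hb => hJd b (Finset.mem_insert_of_mem hb)
      have hJE' : ∀ b ∈ J, Λ.comp q b ∈ E :=
        fun b hb => hJE b (Finset.mem_insert_of_mem hb)
      have ha : Λ.rng a = Λ.src q := hJr a (Finset.mem_insert_self a J)
      have hqaX : Λ.rng (Λ.comp q a) ∈ X := by rw [rng_qa ha]; exact hq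
      rw [DProd_insert hFA hT hq hJr haJ, ← mul_assoc]
      have habs : T p q * T q q = T p q := T_mul_T hFA hT hp hq hq hpq rfl
      have hexp : T p q * T (Λ.comp q a) (Λ.comp q a) = T (Λ.comp p a) (Λ.comp q a) := by
        rw [T_mul_diag hFA hT hp hq hqaX hpq (pre_comp ha), quot_comp_self ha]
      unfold Df
      rw [mul_sub, habs, hexp, sub_mul]
      have h2 := exp_deep hFA hT hE hp hq hpq hJr' hJE' a ha.symm
        (hJd a (Finset.mem_insert_self a J)) (hJE a (Finset.mem_insert_self a J))
      have heq : T p q * DProd T q J - T (Λ.comp p a) (Λ.comp q a) * DProd T q J - T p q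
          = (T p q * DProd T q J - T p q) -
            T (Λ.comp p a) (Λ.comp q a) * DProd T q J := by abel
      rw [heq]
      exact Submodule.sub_mem _ (ih hJr' hJd' hJE') h2

include hFA hT in
/-- Any Theta element lies in the span of the core generators. -/
lemma theta_mem_span_core {p q : Λ.Path} {J : Finset Λ.Path}
    (hp : Λ.rng p ∈ X) (hq : Λ.rng q ∈ X) (hpq : Λ.src p = Λ.src q)
    (hdeg : Λ.deg p = Λ.deg q)
    (hJr : ∀ a ∈ J, Λ.rng a = Λ.src q) (hJd : ∀ a ∈ J, Λ.deg a ≠ 0) :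
    T p q * DProd T q J ∈ Submodule.span ℂ
      {a : A | ∃ α β, Λ.rng α ∈ X ∧ Λ.rng β ∈ X ∧ Λ.src α = Λ.src β ∧
        Λ.deg α = Λ.deg β ∧ a = T α β} := by
  have h1 := exp_top (E := Set.univ) hFA hT
    (fun x _ y _ z _ => Set.mem_univ z) hp hq hpq hJr hJd (fun a _ => Set.mem_univ _)
  have hsub : EBal T Set.univ p q ⊆
      {a : A | ∃ α β, Λ.rng α ∈ X ∧ Λ.rng β ∈ X ∧ Λ.src α = Λ.src β ∧
        Λ.deg α = Λ.deg β ∧ a = T α β} := by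
    rintro x ⟨w, hw, hdw, -, hx⟩
    have hw' : Λ.src p = Λ.rng w := by rw [hpq, hw]
    refine ⟨Λ.comp p w, Λ.comp q w, ?_, ?_, ?_, ?_, hx⟩
    · rw [Λ.rng_comp _ _ hw']; exact hp
    · rw [Λ.rng_comp _ _ hw]; exact hq
    · rw [Λ.src_comp _ _ hw', Λ.src_comp _ _ hw]
    · rw [Λ.deg_comp _ _ hw', Λ.deg_comp _ _ hw, hdeg]
  have h3 : T p q * DProd T q J = (T p q * DProd T q J - T p q) + T p q := by abel
  rw [h3]
  refine Submodule.add_mem _ (Submodule.span_mono hsub h1) ?_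
  exact Submodule.subset_span ⟨p, q, hp, hq, hpq, hdeg, rfl⟩

include hFA hT in
/-- The generators lie in the span of the Theta family. -/
lemma gen_in_V {P : Set (Λ.Path × Λ.Path)} (hEfin : E.Finite)
    (hPX : ∀ pr ∈ P, Λ.rng pr.1 ∈ X ∧ Λ.rng pr.2 ∈ X)
    (hPd : ∀ pr ∈ P, Λ.deg pr.1 = Λ.deg pr.2)
    (hPs : ∀ pr ∈ P, Λ.src pr.1 = Λ.src pr.2)
    (hPsym : ∀ pr ∈ P, (pr.2, pr.1) ∈ P)
    (hEmce : ∀ x ∈ E, ∀ y ∈ E, Λ.MCE x y ⊆ E)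
    (hEstep : ∀ z ∈ E, ∀ z', SStep P z z' → z' ∈ E)
    {M : ℕ} (hM : ∀ z ∈ E, tot (Λ.deg z) ≤ M) :
    ∀ (n : ℕ) (pr : Λ.Path × Λ.Path) (w : Λ.Path), pr ∈ P →
      Λ.src pr.1 = Λ.rng w → Λ.comp pr.1 w ∈ E → Λ.comp pr.2 w ∈ E →
      M + 1 - tot (Λ.deg (Λ.comp pr.1 w)) ≤ n →
      T (Λ.comp pr.1 w) (Λ.comp pr.2 w) ∈ Submodule.span ℂ (ThetaSet T X E) := by
  intro n
  induction n with
  | zero =>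
      intro pr w _ _ hpE _ hn
      have := hM _ hpE
      omega
  | succ n ih =>
      intro pr w hpr hw hpE hqE hn
      set p := Λ.comp pr.1 w with hpdef
      set q := Λ.comp pr.2 w with hqdef
      have hw2 : Λ.src pr.2 = Λ.rng w := by rw [← hPs pr hpr]; exact hw
      have hpX : Λ.rng p ∈ X := by
        rw [hpdef, Λ.rng_comp _ _ hw]; exact (hPX pr hpr).1
      have hqX : Λ.rng q ∈ X := by
        rw [hqdef, Λ.rng_comp _ _ hw2]; exact (hPX pr hpr).2
      have hsrc : Λ.src p = Λ.src q := by
        rw [hpdef, hqdef, Λ.src_comp _ _ hw, Λ.src_comp _ _ hw2]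
      have hsw : Λ.src p = Λ.src w := Λ.src_comp _ _ hw
      have hdeg : Λ.deg p = Λ.deg q := by
        rw [hpdef, hqdef, Λ.deg_comp _ _ hw, Λ.deg_comp _ _ hw2, hPd pr hpr]
      -- the swap principle: companions of E-members are E-members
      have hswap : ∀ u, Λ.src w = Λ.rng u → Λ.comp q u ∈ E → Λ.comp p u ∈ E := by
        intro u hu hquE
        have hwu : Λ.src pr.2 = Λ.rng (Λ.comp w u) := by
          rw [hw2, Λ.rng_comp _ _ hu]
        have hwu1 : Λ.src pr.1 = Λ.rng (Λ.comp w u) := by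
          rw [hPs pr hpr]; exact hwu
        have hq : Λ.comp q u = Λ.comp pr.2 (Λ.comp w u) := by
          rw [hqdef, Λ.comp_assoc _ _ _ hw2 hu]
        have hstep : SStep P (Λ.comp q u) (Λ.comp p u) := by
          refine ⟨pr, hpr, ⟨Λ.comp w u, hwu, hq⟩, ?_⟩
          rw [quot_eq hwu hq, hpdef, Λ.comp_assoc _ _ _ hw hu]
        exact hEstep _ hquE _ hstep
      have hswap' : ∀ u, Λ.src w = Λ.rng u → Λ.comp p u ∈ E → Λ.comp q u ∈ E := by
        intro u hu hpuE
        have hwu1 : Λ.src pr.1 = Λ.rng (Λ.comp w u) := by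
          rw [hw, Λ.rng_comp _ _ hu]
        have hp : Λ.comp p u = Λ.comp pr.1 (Λ.comp w u) := by
          rw [hpdef, Λ.comp_assoc _ _ _ hw hu]
        have hstep : SStep P (Λ.comp p u) (Λ.comp q u) := by
          refine ⟨(pr.2, pr.1), hPsym pr hpr, ⟨Λ.comp w u, hwu1, hp⟩, ?_⟩
          rw [quot_eq hwu1 hp, hqdef, Λ.comp_assoc _ _ _ hw2 hu]
        exact hEstep _ hpuE _ hstep
      -- the defect set
      set J0 : Finset Λ.Path :=
        (xset_finite hFA hEfin p).toFinset ∪ (xset_finite hFA hEfin q).toFinset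
        with hJ0def
      have hJmem : ∀ a ∈ J0, a ∈ XSet E p ∨ a ∈ XSet E q := by
        intro a ha
        rcases Finset.mem_union.mp ha with ha | ha
        · exact Or.inl ((Set.Finite.mem_toFinset _).mp ha)
        · exact Or.inr ((Set.Finite.mem_toFinset _).mp ha)
      have hJr : ∀ a ∈ J0, Λ.rng a = Λ.src q := by
        intro a ha
        rcases hJmem a ha with ha | ha
        · rw [xset_rng ha, hsrc]
        · exact xset_rng ha
      have hJd : ∀ a ∈ J0, Λ.deg a ≠ 0 := by
        intro a ha
        rcases hJmem a ha with ha | ha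
        · exact xset_deg ha
        · exact xset_deg ha
      have hJE : ∀ a ∈ J0, Λ.comp q a ∈ E := by
        intro a ha
        rcases hJmem a ha with ha | ha
        · obtain ⟨hd, σ, hσ, b, hab⟩ := ha
          have hpa : Λ.comp p a ∈ E := hEmce _ hpE _ hσ (minExt_mem_mce hab)
          have hra : Λ.src w = Λ.rng a := by rw [← hsw, xset_rng ⟨hd, σ, hσ, b, hab⟩]
          exact hswap' a hra hpa
        · obtain ⟨hd, σ, hσ, b, hab⟩ := ha
          exact hEmce _ hqE _ hσ (minExt_mem_mce hab)
      -- the Theta element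
      have hθ : T p q * DProd T q J0 ∈ ThetaSet T X E := by
        refine ⟨p, q, J0, hpE, hqE, hpX, hqX, hsrc, hdeg, ?_, ?_, rfl⟩
        · intro a ha
          rcases ha with ha | ha
          · exact Finset.mem_union_left _ ((Set.Finite.mem_toFinset _).mpr ha)
          · exact Finset.mem_union_right _ ((Set.Finite.mem_toFinset _).mpr ha)
        · intro a ha
          rcases hJmem a ha with ha | ha
          · exact xset_subset_bigset hpE ha
          · rw [hsrc]; exact xset_subset_bigset hqE ha
      -- the correction terms
      have hcorr : Submodule.span ℂ (EBal T E p q) ≤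
          Submodule.span ℂ (ThetaSet T X E) := by
        refine Submodule.span_le.mpr ?_
        rintro x ⟨u, hu, hdu, hquE, hx⟩
        have hru : Λ.src w = Λ.rng u := by rw [← hsw, hsrc]; exact hu
        have hpuE : Λ.comp p u ∈ E := hswap u hru hquE
        have e1 : Λ.comp p u = Λ.comp pr.1 (Λ.comp w u) := by
          rw [hpdef, Λ.comp_assoc _ _ _ hw hru]
        have e2 : Λ.comp q u = Λ.comp pr.2 (Λ.comp w u) := by
          rw [hqdef, Λ.comp_assoc _ _ _ hw2 hru]
        have hx' : x = T (Λ.comp pr.1 (Λ.comp w u)) (Λ.comp pr.2 (Λ.comp w u)) := by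
          rw [hx, e1, e2]
        rw [hx']
        refine ih pr (Λ.comp w u) hpr (by rw [hw, Λ.rng_comp _ _ hru]) ?_ ?_ ?_
        · rw [← e1]; exact hpuE
        · rw [← e2]; exact hquE
        · have hd1 : Λ.deg (Λ.comp pr.1 (Λ.comp w u)) = Λ.deg p + Λ.deg u := by
            rw [← e1]
            exact Λ.deg_comp p u (by rw [hsrc]; exact hu)
          have htu : 1 ≤ tot (Λ.deg u) := tot_pos hdu
          have hle : tot (Λ.deg (Λ.comp pr.1 (Λ.comp w u))) ≤ M := by
            refine hM _ ?_
            rw [← e1]; exact hpuE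
          rw [hd1, tot_add]
          omega
      have hsplit : T p q = T p q * DProd T q J0 -
          (T p q * DProd T q J0 - T p q) := by abel
      rw [hsplit]
      refine Submodule.sub_mem _ (Submodule.subset_span hθ) ?_
      exact hcorr (exp_top hFA hT hEmce hpX hqX hsrc hJr hJd hJE)

end Theta

end KGraph
/-- For a finitely aligned `k`-graph `Λ` and nonempty
`X ⊆ Λ^0`, the fixed-point algebra of the gauge action — the closed span of
`{T_{α,β} : d(α) = d(β)}` — is AF: every finite subset of it is norm
approximated by elements of a finite-dimensional star-subalgebra contained
in it. -/
theorem KGraph.core_is_AF {k : ℕ} (Λ : KGraph k)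
    (hFA : Λ.FinitelyAligned)
    {A : Type} [NormedRing A] [StarRing A] [CStarRing A]
    [NormedAlgebra ℂ A] [CompleteSpace A] [StarModule ℂ A]
    (X : Set Λ.Path) (hX : X.Nonempty ∧ X ⊆ {v | Λ.IsVertex v})
    (T : Λ.Path → Λ.Path → A) (hT : Λ.CKFamilyX X T) :
    ∀ F : Finset A,
      (↑F : Set A) ⊆ closure (↑(Submodule.span ℂ
        {a : A | ∃ α β, Λ.rng α ∈ X ∧ Λ.rng β ∈ X ∧ Λ.src α = Λ.src β ∧
          Λ.deg α = Λ.deg β ∧ a = T α β}) : Set A) →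
      ∀ ε : ℝ, 0 < ε →
        ∃ S : NonUnitalStarSubalgebra ℂ A, FiniteDimensional ℂ S ∧
          (↑S : Set A) ⊆ closure (↑(Submodule.span ℂ
            {a : A | ∃ α β, Λ.rng α ∈ X ∧ Λ.rng β ∈ X ∧
              Λ.src α = Λ.src β ∧ Λ.deg α = Λ.deg β ∧ a = T α β}) : Set A) ∧
          ∀ a ∈ F, ∃ b ∈ S, ‖a - b‖ < ε := by
  classical
  intro F hF ε hε
  set coreSet : Set A := {a : A | ∃ α β, Λ.rng α ∈ X ∧ Λ.rng β ∈ X ∧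
    Λ.src α = Λ.src β ∧ Λ.deg α = Λ.deg β ∧ a = T α β} with hcore
  -- pick approximants with finite generating sets
  have hpick : ∀ a ∈ F, ∃ b : A, ‖a - b‖ < ε ∧
      ∃ G : Finset A, ↑G ⊆ coreSet ∧ b ∈ Submodule.span ℂ (↑G : Set A) := by
    intro a ha
    have hcl := hF ha
    rw [Metric.mem_closure_iff] at hcl
    obtain ⟨b, hb1, hb2⟩ := hcl ε hε
    obtain ⟨G, hG1, hG2⟩ := Submodule.mem_span_finite_of_mem_span hb1
    exact ⟨b, by rwa [dist_eq_norm] at hb2, G, hG1, hG2⟩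
  choose bf hbf Gf hGf1 hGf2 using hpick
  set G : Finset A := F.attach.biUnion (fun a => Gf a.1 a.2) with hGdef
  have hGcore : (↑G : Set A) ⊆ coreSet := by
    intro g hg
    rw [hGdef, Finset.coe_biUnion] at hg
    obtain ⟨a, -, hga⟩ := Set.mem_iUnion₂.mp hg
    exact hGf1 a.1 a.2 hga
  have hGpairs : ∀ g ∈ G, ∃ pr : Λ.Path × Λ.Path, Λ.rng pr.1 ∈ X ∧
      Λ.rng pr.2 ∈ X ∧ Λ.src pr.1 = Λ.src pr.2 ∧ Λ.deg pr.1 = Λ.deg pr.2 ∧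
      g = T pr.1 pr.2 := by
    intro g hg
    obtain ⟨α, β, h1, h2, h3, h4, h5⟩ := hGcore hg
    exact ⟨(α, β), h1, h2, h3, h4, h5⟩
  choose prf hpr1 hpr2 hpr3 hpr4 hpr5 using hGpairs
  -- the pool of pairs
  set P : Set (Λ.Path × Λ.Path) :=
    ⋃ g : {x // x ∈ G}, {prf g.1 g.2, ((prf g.1 g.2).2, (prf g.1 g.2).1)} with hPdef
  have hPfin : P.Finite := by
    rw [hPdef]
    exact Set.finite_iUnion (fun g => (Set.finite_singleton _).insert _)
  have hPcases : ∀ pr ∈ P, ∃ g : {x // x ∈ G},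
      pr = prf g.1 g.2 ∨ pr = ((prf g.1 g.2).2, (prf g.1 g.2).1) := by
    intro pr hpr
    rw [hPdef] at hpr
    obtain ⟨g, hg⟩ := Set.mem_iUnion.mp hpr
    rcases hg with hg | hg
    · exact ⟨g, Or.inl hg⟩
    · exact ⟨g, Or.inr hg⟩
  have hPX : ∀ pr ∈ P, Λ.rng pr.1 ∈ X ∧ Λ.rng pr.2 ∈ X := by
    intro pr hpr
    obtain ⟨g, hg | hg⟩ := hPcases pr hpr <;> rw [hg]
    · exact ⟨hpr1 g.1 g.2, hpr2 g.1 g.2⟩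
    · exact ⟨hpr2 g.1 g.2, hpr1 g.1 g.2⟩
  have hPd : ∀ pr ∈ P, Λ.deg pr.1 = Λ.deg pr.2 := by
    intro pr hpr
    obtain ⟨g, hg | hg⟩ := hPcases pr hpr <;> rw [hg]
    · exact hpr4 g.1 g.2
    · exact (hpr4 g.1 g.2).symm
  have hPs : ∀ pr ∈ P, Λ.src pr.1 = Λ.src pr.2 := by
    intro pr hpr
    obtain ⟨g, hg | hg⟩ := hPcases pr hpr <;> rw [hg]
    · exact hpr3 g.1 g.2
    · exact (hpr3 g.1 g.2).symm
  have hPsym : ∀ pr ∈ P, (pr.2, pr.1) ∈ P := by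
    intro pr hpr
    obtain ⟨g, hg | hg⟩ := hPcases pr hpr <;> rw [hg, hPdef]
    · exact Set.mem_iUnion.mpr ⟨g, Or.inr rfl⟩
    · exact Set.mem_iUnion.mpr ⟨g, Or.inl rfl⟩
  -- the closed finite path set
  set S0 : Set Λ.Path := {μ | ∃ pr ∈ P, pr.1 = μ} with hS0def
  have hS0fin : S0.Finite := fsts_finite hPfin
  obtain ⟨E, hEfin, hS0E, hEmce, hEstep⟩ :=
    exists_closure hFA hPfin hPd hPs hPsym hS0fin
  have hcomp1E : ∀ pr ∈ P, pr.1 ∈ E := fun pr hpr => hS0E ⟨pr, hpr, rfl⟩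
  have hcomp2E : ∀ pr ∈ P, pr.2 ∈ E := fun pr hpr =>
    hS0E ⟨(pr.2, pr.1), hPsym pr hpr, rfl⟩
  set M : ℕ := hEfin.toFinset.sup (fun z => tot (Λ.deg z)) with hMdef
  have hM : ∀ z ∈ E, tot (Λ.deg z) ≤ M := fun z hz =>
    Finset.le_sup (f := fun z => tot (Λ.deg z)) (hEfin.mem_toFinset.mpr hz)
  -- the finite-dimensional span
  set V : Submodule ℂ A := Submodule.span ℂ (ThetaSet T X E) with hVdef
  have hVfd : FiniteDimensional ℂ ↥V :=
    FiniteDimensional.span_of_finite ℂ (thetaSet_finite hFA hEfin)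
  have hVcore : V ≤ Submodule.span ℂ coreSet := by
    rw [hVdef]
    refine Submodule.span_le.mpr ?_
    rintro x ⟨p, q, J, hp, hq, hpX, hqX, hpq, hdeg, hJ1, hJ2, hx⟩
    rw [hx]
    refine theta_mem_span_core hFA hT hpX hqX hpq hdeg ?_ ?_
    · intro a ha
      rw [← hpq]
      exact bigset_rng (hJ2 ha)
    · intro a ha
      exact bigset_deg (hJ2 ha)
  -- multiplicative closure
  have hmulset : ∀ x ∈ ThetaSet T X E, ∀ y ∈ ThetaSet T X E, x * y ∈ V := by
    rintro x ⟨p, q, J, hp, hq, hpX, hqX, hpq, hdeg, hJ1, hJ2, hx⟩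
      y ⟨σ, τ, J', hσ, hτ, hσX, hτX, hστ, hdeg', hJ1', hJ2', hy⟩
    have hJr : ∀ a ∈ J, Λ.rng a = Λ.src q := by
      intro a ha
      rw [← hpq]
      exact bigset_rng (hJ2 ha)
    have hJ'r : ∀ a ∈ J', Λ.rng a = Λ.src τ := by
      intro a ha
      rw [← hστ]
      exact bigset_rng (hJ2' ha)
    by_cases hqσ : q = σ
    · subst hqσ
      rw [hx, hy, theta_mul_eq hFA hT hpX hqX hτX hpq hστ hJr hJ'r]
      refine Submodule.subset_span ⟨p, τ, J ∪ J', hp, hτ, hpX, hτX, ?_, ?_, ?_, ?_, rfl⟩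
      · rw [hpq, hστ]
      · rw [hdeg, hdeg']
      · intro a ha
        rcases ha with ha | ha
        · exact Finset.mem_union_left _ (hJ1 (Set.mem_union_left _ ha))
        · exact Finset.mem_union_right _ (hJ1' (Set.mem_union_right _ ha))
      · intro a ha
        rcases Finset.mem_union.mp ha with ha | ha
        · exact hJ2 ha
        · rw [show Λ.src p = Λ.src q from hpq]
          exact hJ2' ha
    · rw [hx, hy, theta_mul_ne hFA hT hpX hqX hσX hτX hpq hστ hqσ hq hσ hJr
        (fun a ha => bigset_rng (hJ2' ha))
        (fun a ha => hJ1 (Set.mem_union_right _ ha))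
        (fun a ha => hJ1' (Set.mem_union_left _ ha))]
      exact V.zero_mem
  have hmul : ∀ x ∈ V, ∀ y ∈ V, x * y ∈ V := by
    intro x hx y hy
    have h1 : V * V ≤ V := by
      rw [hVdef, Submodule.span_mul_span]
      refine Submodule.span_le.mpr ?_
      rintro z ⟨x', hx', y', hy', rfl⟩
      exact hmulset x' hx' y' hy'
    exact h1 (Submodule.mul_mem_mul hx hy)
  -- star closure
  have hstarset : ∀ x ∈ ThetaSet T X E, star x ∈ ThetaSet T X E := by
    rintro x ⟨p, q, J, hp, hq, hpX, hqX, hpq, hdeg, hJ1, hJ2, hx⟩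
    have hJr : ∀ a ∈ J, Λ.rng a = Λ.src q := by
      intro a ha
      rw [← hpq]
      exact bigset_rng (hJ2 ha)
    rw [hx, theta_star hFA hT hpX hqX hpq hJr]
    refine ⟨q, p, J, hq, hp, hqX, hpX, hpq.symm, hdeg.symm, ?_, ?_, rfl⟩
    · intro a ha
      rcases ha with ha | ha
      · exact hJ1 (Set.mem_union_right _ ha)
      · exact hJ1 (Set.mem_union_left _ ha)
    · intro a ha
      rw [← hpq]
      exact hJ2 ha
  have hstar : ∀ x ∈ V, star x ∈ V := by
    intro x hx
    rw [hVdef] at hx ⊢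
    induction hx using Submodule.span_induction with
    | mem x hx => exact Submodule.subset_span (hstarset x hx)
    | zero => rw [star_zero]; exact Submodule.zero_mem _
    | add x y _ _ hx hy => rw [star_add]; exact Submodule.add_mem _ hx hy
    | smul c x _ hx => rw [star_smul]; exact Submodule.smul_mem _ _ hx
  -- the subalgebra
  refine ⟨{ carrier := ↑V
            add_mem' := fun ha hb => V.add_mem ha hb
            zero_mem' := V.zero_mem
            mul_mem' := fun ha hb => hmul _ ha _ hb
            smul_mem' := fun c a ha => V.smul_mem c ha
            star_mem' := fun ha => hstar _ ha }, ?_, ?_, ?_⟩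
  · exact hVfd
  · intro x hx
    exact subset_closure (hVcore hx)
  · -- approximation
    intro a ha
    refine ⟨bf a ha, ?_, hbf a ha⟩
    have hle : Submodule.span ℂ (↑(Gf a ha) : Set A) ≤ V := by
      refine Submodule.span_le.mpr ?_
      intro g hg
      have hgG : g ∈ G := by
        rw [hGdef]
        exact Finset.mem_biUnion.mpr ⟨⟨a, ha⟩, Finset.mem_attach F _, hg⟩
      have hprP : prf g hgG ∈ P := by
        rw [hPdef]
        exact Set.mem_iUnion.mpr ⟨⟨g, hgG⟩, Or.inl rfl⟩
      have e1 : Λ.comp (prf g hgG).1 (Λ.src (prf g hgG).1) = (prf g hgG).1 :=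
        Λ.comp_id _
      have e2 : Λ.comp (prf g hgG).2 (Λ.src (prf g hgG).1) = (prf g hgG).2 := by
        rw [hpr3 g hgG]
        exact Λ.comp_id _
      have hmem := gen_in_V hFA hT hEfin hPX hPd hPs hPsym hEmce hEstep hM
        (M + 1) (prf g hgG) (Λ.src (prf g hgG).1) hprP
        (Λ.rng_src _).symm
        (by rw [e1]; exact hcomp1E _ hprP)
        (by rw [e2]; exact hcomp2E _ hprP)
        (by omega)
      rw [e1, e2] at hmem
      rw [hpr5 g hgG]
      exact hmem
    exact hle (hGf2 a ha)
end
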